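/- arXiv:0803.3990 — 3 statements merged into one kernel-verified Lean document; each statement's English description precedes it below -/
import Mathlib

section
/- Let N ≥ 1 and let n_0, n_1, …, n_D be natural numbers with ∑_{k=0}^{D} n_k = N and ∑_{k=0}^{D} k·n_k = N − 1. Then the number of sequences d ∈ 𝕋_N(D) with χ_k(d) = n_k for every 0 ≤ k ≤ D satisfies N · #{d ∈ 𝕋_N(D) : χ_k(d) = n_k for all k} = N!/(n_0!·n_1!⋯n_D!); that is, the number of plane trees on N vertices with exactly n_k vertices of branching degree k equals (1/N)·N!/(n_0!·n_1!⋯n_D!). -/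
open Finset Filter MeasureTheory

/-- The set `M` of probability vectors on `{0,…,D}` with mean `1`. -/
def Mset (D : ℕ) : Set (Fin (D+1) → ℝ) :=
  {p | (∀ k, p k ∈ Set.Icc (0:ℝ) 1) ∧ ∑ k, p k = 1 ∧ ∑ k : Fin (D+1), ((k : ℕ) : ℝ) * p k = 1}

/-- Entropy `h(p) = -∑ p_k ln p_k` (note `Real.log 0 = 0`). -/
noncomputable def entropyFn (D : ℕ) (p : Fin (D+1) → ℝ) : ℝ :=
  -∑ k, p k * Real.log (p k)

/-- Energy `E(p) = ∑ p_k c(k)`. -/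
noncomputable def energyFn (D : ℕ) (c : Fin (D+1) → ℝ) (p : Fin (D+1) → ℝ) : ℝ :=
  ∑ k, p k * c k

/-- Free energy functional `J(p) = β E(p) - h(p)`. -/
noncomputable def Jfun (D : ℕ) (β : ℝ) (c : Fin (D+1) → ℝ) (p : Fin (D+1) → ℝ) : ℝ :=
  β * energyFn D c p - entropyFn D p

/-- Preorder degree sequence of a plane tree on `N` vertices, degrees `≤ D`. -/
def IsTreeSeq (D N : ℕ) (d : Fin N → Fin (D+1)) : Prop :=
  (∑ i, (d i : ℕ)) = N - 1 ∧
    ∀ m : ℕ, 1 ≤ m → m < N →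
      m ≤ ∑ i ∈ Finset.univ.filter (fun i : Fin N => (i : ℕ) < m), (d i : ℕ)

open scoped Classical in
/-- The finite set `𝕋_N(D)` of plane trees (as degree sequences). -/
noncomputable def Trees (D N : ℕ) : Finset (Fin N → Fin (D+1)) :=
  Finset.univ.filter (IsTreeSeq D N)

/-- `χ_k(d)`: the number of vertices of branching degree `k`. -/
def chi (D N : ℕ) (d : Fin N → Fin (D+1)) (k : Fin (D+1)) : ℕ :=
  (Finset.univ.filter (fun i => d i = k)).card

/-- The energy `H(d) = ∑ c(d(i))` of a tree. -/
noncomputable def Hamil (D N : ℕ) (c : Fin (D+1) → ℝ) (d : Fin N → Fin (D+1)) : ℝ :=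
  ∑ i, c (d i)

/-- The partition function `Z_N`. -/
noncomputable def Zpart (D N : ℕ) (β : ℝ) (c : Fin (D+1) → ℝ) : ℝ :=
  ∑ d ∈ Trees D N, Real.exp (-β * Hamil D N c d)

open scoped Classical in
/-- The Gibbs probability `P_N(S)` of an event `S ⊆ 𝕋_N(D)`. -/
noncomputable def Pgibbs (D N : ℕ) (β : ℝ) (c : Fin (D+1) → ℝ)
    (S : Set (Fin N → Fin (D+1))) : ℝ :=
  (∑ d ∈ (Trees D N).filter (fun d => d ∈ S), Real.exp (-β * Hamil D N c d)) /
    Zpart D N β c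

/-- `ν_N`: the law of `(χ_0/N, …, χ_D/N)` under the Gibbs measure `P_N`. -/
noncomputable def nuN (D N : ℕ) (β : ℝ) (c : Fin (D+1) → ℝ) :
    Measure (Fin (D+1) → ℝ) :=
  ∑ d ∈ Trees D N,
    (ENNReal.ofReal (Real.exp (-β * Hamil D N c d) / Zpart D N β c)) •
      Measure.dirac (fun k => (chi D N d k : ℝ) / N)


-- ========== auxiliary material for stmt4 ==========

lemma chi_eq_card (D N : ℕ) (d : Fin N → Fin (D+1)) (k : Fin (D+1)) :
    chi D N d k = Fintype.card {i // d i = k} := by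
  rw [chi, Fintype.card_subtype]

lemma chi_comp_equiv (D N : ℕ) (d : Fin N → Fin (D+1)) (e : Fin N ≃ Fin N) (k : Fin (D+1)) :
    chi D N (d ∘ e) k = chi D N d k := by
  rw [chi_eq_card, chi_eq_card]
  exact Fintype.card_congr (e.subtypeEquiv (fun i => Iff.rfl))

lemma card_sigma_fiber (D : ℕ) (n : Fin (D+1) → ℕ) (k : Fin (D+1)) :
    Fintype.card {x : Σ k : Fin (D+1), Fin (n k) // x.1 = k} = n k := by
  rw [Fintype.card_subtype, Finset.card_filter, ← Finset.univ_sigma_univ, Finset.sum_sigma]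
  simp [apply_ite Finset.card, Finset.sum_ite_eq']

lemma card_chi_filter_mul (D N : ℕ) (n : Fin (D+1) → ℕ) (h1 : ∑ k, n k = N) :
    (Finset.univ.filter (fun d : Fin N → Fin (D+1) => ∀ k, chi D N d k = n k)).card
      * ∏ k, (n k).factorial = N.factorial := by
  classical
  have hcard : Fintype.card (Σ k : Fin (D+1), Fin (n k)) = Fintype.card (Fin N) := by
    simp [Fintype.card_sigma, h1]
  let e : Fin N ≃ Σ k : Fin (D+1), Fin (n k) := (Fintype.equivOfCardEq hcard).symm
  set d₀ : Fin N → Fin (D+1) := fun i => (e i).1 with hd₀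
  have hchi0 : ∀ k, chi D N d₀ k = n k := by
    intro k
    rw [chi_eq_card]
    rw [Fintype.card_congr (e.subtypeEquiv (q := fun x : Σ k : Fin (D+1), Fin (n k) => x.1 = k)
      (fun i => Iff.rfl))]
    exact card_sigma_fiber D n k
  set A := Finset.univ.filter (fun d : Fin N → Fin (D+1) => ∀ k, chi D N d k = n k) with hA
  have hmaps : ∀ σ : Equiv.Perm (Fin N), d₀ ∘ σ ∈ A := by
    intro σ
    simp only [hA, Finset.mem_filter, Finset.mem_univ, true_and]
    intro k
    rw [chi_comp_equiv]; exact hchi0 k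
  have hcount : (Finset.univ : Finset (Equiv.Perm (Fin N))).card
      = ∑ d ∈ A, (Finset.univ.filter (fun σ : Equiv.Perm (Fin N) => d₀ ∘ σ = d)).card := by
    exact Finset.card_eq_sum_card_fiberwise (fun σ _ => hmaps σ)
  have hfiber : ∀ d ∈ A, (Finset.univ.filter (fun σ : Equiv.Perm (Fin N) => d₀ ∘ σ = d)).card
      = ∏ k, (n k).factorial := by
    intro d hd
    simp only [hA, Finset.mem_filter, Finset.mem_univ, true_and] at hd
    have hcardf : ∀ k, Fintype.card {i // d i = k} = Fintype.card {i // d₀ i = k} := by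
      intro k; rw [← chi_eq_card, ← chi_eq_card, hd k, hchi0 k]
    let τ : Equiv.Perm (Fin N) :=
      (Equiv.sigmaFiberEquiv d).symm.trans
        ((Equiv.sigmaCongrRight fun k => Fintype.equivOfCardEq (hcardf k)).trans
          (Equiv.sigmaFiberEquiv d₀))
    have hτ : d₀ ∘ τ = d := by
      funext i
      show d₀ ((Fintype.equivOfCardEq (hcardf (d i)) ⟨i, rfl⟩ : {j // d₀ j = d i}) : Fin N) = d i
      exact (Fintype.equivOfCardEq (hcardf (d i)) ⟨i, rfl⟩).2
    rw [← Fintype.card_subtype]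
    rw [← Fintype.card_congr (Equiv.subtypeEquiv (p := fun ρ : Equiv.Perm (Fin N) => d₀ ∘ ⇑ρ = d₀)
      (q := fun σ : Equiv.Perm (Fin N) => d₀ ∘ ⇑σ = d) (Equiv.mulRight τ) ?_)]
    · rw [DomMulAct.stabilizer_card d₀]
      refine Finset.prod_congr rfl fun k _ => ?_
      rw [← chi_eq_card, hchi0]
    · intro ρ
      constructor
      · intro h
        funext x
        show d₀ (ρ (τ x)) = d x
        calc d₀ (ρ (τ x)) = (d₀ ∘ ρ) (τ x) := rfl
          _ = d₀ (τ x) := by rw [h]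
          _ = d x := congrFun hτ x
      · intro h
        funext x
        have h1x := congrFun h (τ.symm x)
        have h2x := congrFun hτ (τ.symm x)
        simp only [Function.comp_apply, Equiv.coe_mulRight, Equiv.Perm.mul_apply,
          Equiv.apply_symm_apply] at h1x h2x
        show d₀ (ρ x) = d₀ x
        rw [h1x, ← h2x]
  rw [Finset.card_univ, Fintype.card_perm, Fintype.card_fin] at hcount
  rw [hcount, Finset.sum_congr rfl hfiber, Finset.sum_const, smul_eq_mul]

section Rot
variable {N D : ℕ}

def rotIdx (hN : 0 < N) (j : ℕ) (i : Fin N) : Fin N := ⟨(i.1 + j) % N, Nat.mod_lt _ hN⟩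

lemma rotIdx_rotIdx (hN : 0 < N) (j k : ℕ) (i : Fin N) :
    rotIdx hN k (rotIdx hN j i) = rotIdx hN (j + k) i := by
  simp only [rotIdx, Fin.mk.injEq]
  rw [Nat.mod_add_mod, Nat.add_assoc]

lemma rotIdx_zero (hN : 0 < N) (i : Fin N) : rotIdx hN 0 i = i := by
  simp [rotIdx, Nat.mod_eq_of_lt i.2]

lemma rotIdx_mod (hN : 0 < N) (j : ℕ) (i : Fin N) : rotIdx hN (j % N) i = rotIdx hN j i := by
  simp [rotIdx, Nat.add_mod_mod]

lemma rotIdx_bijective (hN : 0 < N) (j : ℕ) : Function.Bijective (rotIdx hN j) := by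
  rw [Fintype.bijective_iff_injective_and_card]
  refine ⟨fun a b hab => ?_, rfl⟩
  simp only [rotIdx, Fin.mk.injEq] at hab
  have : a.1 % N = b.1 % N := (Nat.ModEq.add_right_cancel' j hab)
  rwa [Nat.mod_eq_of_lt a.2, Nat.mod_eq_of_lt b.2, ← Fin.ext_iff] at this

noncomputable def rotEquiv (hN : 0 < N) (j : ℕ) : Fin N ≃ Fin N :=
  Equiv.ofBijective (rotIdx hN j) (rotIdx_bijective hN j)

def rotFn (hN : 0 < N) (j : ℕ) (d : Fin N → Fin (D+1)) : Fin N → Fin (D+1) :=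
  fun i => d (rotIdx hN j i)

lemma rotFn_rotFn (hN : 0 < N) (j k : ℕ) (d : Fin N → Fin (D+1)) :
    rotFn hN k (rotFn hN j d) = rotFn hN (k + j) d := by
  funext i
  simp only [rotFn, rotIdx_rotIdx]

lemma rotFn_zero (hN : 0 < N) (d : Fin N → Fin (D+1)) : rotFn hN 0 d = d := by
  funext i; simp [rotFn, rotIdx_zero]

lemma rotFn_mod (hN : 0 < N) (j : ℕ) (d : Fin N → Fin (D+1)) :
    rotFn hN (j % N) d = rotFn hN j d := by
  funext i; simp [rotFn, rotIdx_mod]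

lemma rotFn_inv (hN : 0 < N) {j : ℕ} (hj : j ≤ N) (d : Fin N → Fin (D+1)) :
    rotFn hN ((N - j) % N) (rotFn hN j d) = d := by
  rw [rotFn_rotFn, ← rotFn_mod, Nat.mod_add_mod, Nat.sub_add_cancel hj, Nat.mod_self, rotFn_zero]

lemma sum_rotFn (hN : 0 < N) (j : ℕ) (d : Fin N → Fin (D+1)) :
    ∑ i, ((rotFn hN j d) i : ℕ) = ∑ i, (d i : ℕ) :=
  Equiv.sum_comp (rotEquiv hN j) (fun i => (d i : ℕ))

end Rot

section Tsum
variable {N D : ℕ}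

noncomputable def gfun (hN : 0 < N) (d : Fin N → Fin (D+1)) : ℕ → ℤ :=
  fun i => ((d ⟨i % N, Nat.mod_lt _ hN⟩ : ℕ) : ℤ) - 1

noncomputable def Tsum (hN : 0 < N) (d : Fin N → Fin (D+1)) (m : ℕ) : ℤ :=
  ∑ i ∈ Finset.range m, gfun hN d i

lemma gfun_add_N (hN : 0 < N) (d : Fin N → Fin (D+1)) (i : ℕ) :
    gfun hN d (i + N) = gfun hN d i := by
  simp [gfun, Nat.add_mod_right]

lemma Tsum_succ (hN : 0 < N) (d : Fin N → Fin (D+1)) (m : ℕ) :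
    Tsum hN d (m + 1) = Tsum hN d m + gfun hN d m := by
  simp [Tsum, Finset.sum_range_succ]

lemma Tsum_N (hN : 0 < N) (d : Fin N → Fin (D+1))
    (sumd : ∑ i, (d i : ℕ) = N - 1) : Tsum hN d N = -1 := by
  have h0 : ∑ i ∈ Finset.range N, (d ⟨i % N, Nat.mod_lt _ hN⟩ : ℕ) = N - 1 := by
    rw [← Fin.sum_univ_eq_sum_range (fun i => (d ⟨i % N, Nat.mod_lt _ hN⟩ : ℕ)) N]
    rw [← sumd]
    refine Finset.sum_congr rfl fun i _ => ?_
    exact congrArg (fun x => (d x : ℕ)) (Fin.ext (Nat.mod_eq_of_lt i.2))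
  have : Tsum hN d N
      = (∑ i ∈ Finset.range N, ((d ⟨i % N, Nat.mod_lt _ hN⟩ : ℕ) : ℤ)) - N := by
    simp [Tsum, gfun, Finset.sum_sub_distrib]
  rw [this, ← Nat.cast_sum, h0]
  have h1N : (1:ℕ) ≤ N := hN
  rw [Nat.cast_sub h1N]
  push_cast
  ring

lemma Tsum_add_N (hN : 0 < N) (d : Fin N → Fin (D+1))
    (sumd : ∑ i, (d i : ℕ) = N - 1) (m : ℕ) :
    Tsum hN d (m + N) = Tsum hN d m - 1 := by
  induction m with
  | zero => simpa [Tsum] using Tsum_N hN d sumd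
  | succ m ih =>
      have : m + 1 + N = (m + N) + 1 := by ring
      rw [this, Tsum_succ, gfun_add_N, ih, Tsum_succ]
      ring

lemma sum_filter_lt (hN : 0 < N) (f : Fin N → ℕ) {m : ℕ} (hm : m ≤ N) :
    ∑ i ∈ Finset.univ.filter (fun i : Fin N => (i : ℕ) < m), f i
      = ∑ i ∈ Finset.range m, f ⟨i % N, Nat.mod_lt _ hN⟩ := by
  refine Finset.sum_nbij' (fun i => (i : ℕ)) (fun i => ⟨i % N, Nat.mod_lt _ hN⟩)
    ?_ ?_ ?_ ?_ ?_
  · intro a ha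
    simp only [Finset.mem_filter] at ha
    exact Finset.mem_range.mpr ha.2
  · intro a ha
    have ha' := Finset.mem_range.mp ha
    simp only [Finset.mem_filter, Finset.mem_univ, true_and]
    calc (a % N : ℕ) ≤ a := Nat.mod_le _ _
      _ < m := ha'
  · intro a _; exact Fin.ext (Nat.mod_eq_of_lt a.2)
  · intro a ha; exact Nat.mod_eq_of_lt (lt_of_lt_of_le (Finset.mem_range.mp ha) hm)
  · intro a _
    congr 1
    exact Fin.ext (Nat.mod_eq_of_lt a.2).symm

lemma ballot_sum (hN : 0 < N) (d : Fin N → Fin (D+1)) (j : ℕ) {m : ℕ} (hm : m ≤ N) :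
    ((∑ i ∈ Finset.univ.filter (fun i : Fin N => (i : ℕ) < m),
        ((rotFn hN j d) i : ℕ) : ℕ) : ℤ)
      = Tsum hN d (j + m) - Tsum hN d j + m := by
  rw [sum_filter_lt hN _ hm]
  have h1 : Tsum hN d (j + m) = Tsum hN d j + ∑ i ∈ Finset.range m, gfun hN d (j + i) := by
    simp [Tsum, Finset.sum_range_add]
  have h2 : ∀ i ∈ Finset.range m,
      ((rotFn hN j d ⟨i % N, Nat.mod_lt _ hN⟩ : ℕ) : ℤ) = gfun hN d (j + i) + 1 := by
    intro i _
    simp only [rotFn, rotIdx, gfun]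
    have hidx : (⟨(i % N + j) % N, Nat.mod_lt _ hN⟩ : Fin N) = ⟨(j + i) % N, Nat.mod_lt _ hN⟩ :=
      Fin.ext (by simp only [Nat.mod_add_mod]; rw [Nat.add_comm])
    rw [hidx]
    ring
  rw [Nat.cast_sum, Finset.sum_congr rfl h2, Finset.sum_add_distrib, Finset.sum_const,
    Finset.card_range, h1]
  push_cast
  ring

lemma tree_iff (hN : 0 < N) (d : Fin N → Fin (D+1))
    (sumd : ∑ i, (d i : ℕ) = N - 1) (j : ℕ) :
    IsTreeSeq D N (rotFn hN j d) ↔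
      ∀ m : ℕ, 1 ≤ m → m < N → Tsum hN d j ≤ Tsum hN d (j + m) := by
  have hsum : ∑ i, ((rotFn hN j d) i : ℕ) = N - 1 := by rw [sum_rotFn]; exact sumd
  constructor
  · rintro ⟨-, hb⟩ m h1 h2
    have := hb m h1 h2
    have hcast : (m : ℤ) ≤ Tsum hN d (j + m) - Tsum hN d j + m := by
      rw [← ballot_sum hN d j (le_of_lt h2)]
      exact_mod_cast this
    linarith
  · intro hT
    refine ⟨hsum, fun m h1 h2 => ?_⟩
    have := hT m h1 h2
    have hcast : (m : ℤ) ≤ Tsum hN d (j + m) - Tsum hN d j + m := by linarith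
    rw [← ballot_sum hN d j (le_of_lt h2)] at hcast
    exact_mod_cast hcast

end Tsum

lemma cycle_lemma {N D : ℕ} (hN : 0 < N) (d : Fin N → Fin (D+1))
    (sumd : ∑ i, (d i : ℕ) = N - 1) :
    ∃! j : ℕ, j < N ∧ IsTreeSeq D N (rotFn hN j d) := by
  -- existence of a minimizer
  have hex : ∃ j, j < N ∧ ∀ i < N, Tsum hN d j ≤ Tsum hN d i := by
    obtain ⟨j, hj, hmin⟩ := Finset.exists_min_image (Finset.range N) (Tsum hN d)
      ⟨0, Finset.mem_range.mpr hN⟩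
    exact ⟨j, Finset.mem_range.mp hj, fun i hi => hmin i (Finset.mem_range.mpr hi)⟩
  set j₀ := Nat.find hex with hj₀def
  obtain ⟨hj₀N, hj₀min⟩ := Nat.find_spec hex
  have hfirst : ∀ i, i < j₀ → Tsum hN d j₀ < Tsum hN d i := by
    intro i hi
    have hiN : i < N := lt_trans hi hj₀N
    rcases lt_or_eq_of_le (hj₀min i hiN) with h | h
    · exact h
    · exfalso
      exact Nat.find_min hex hi ⟨hiN, fun l hl => h ▸ hj₀min l hl⟩
  -- goodness predicate
  have good_iff : ∀ j, IsTreeSeq D N (rotFn hN j d) ↔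
      ∀ m : ℕ, 1 ≤ m → m < N → Tsum hN d j ≤ Tsum hN d (j + m) := fun j => tree_iff hN d sumd j
  refine ⟨j₀, ⟨hj₀N, (good_iff j₀).mpr ?_⟩, ?_⟩
  · intro m h1 h2
    rcases lt_or_ge (j₀ + m) N with h | h
    · exact hj₀min _ h
    · have hi : j₀ + m - N < j₀ := by omega
      have heq : j₀ + m = (j₀ + m - N) + N := by omega
      rw [heq, Tsum_add_N hN d sumd]
      have := hfirst _ hi
      omega
  · -- uniqueness
    intro j' ⟨hj'N, htree'⟩
    have hgood' := (good_iff j').mp htree'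
    have hgood₀ : ∀ m : ℕ, 1 ≤ m → m < N → Tsum hN d j₀ ≤ Tsum hN d (j₀ + m) := by
      intro m h1 h2
      rcases lt_or_ge (j₀ + m) N with h | h
      · exact hj₀min _ h
      · have hi : j₀ + m - N < j₀ := by omega
        have heq : j₀ + m = (j₀ + m - N) + N := by omega
        rw [heq, Tsum_add_N hN d sumd]
        have := hfirst _ hi
        omega
    -- two distinct good indices lead to contradiction
    have key : ∀ a b : ℕ, a < b → b < N →
        (∀ m : ℕ, 1 ≤ m → m < N → Tsum hN d a ≤ Tsum hN d (a + m)) →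
        (∀ m : ℕ, 1 ≤ m → m < N → Tsum hN d b ≤ Tsum hN d (b + m)) → False := by
      intro a b hab hbN gooda goodb
      have h1 : Tsum hN d b ≤ Tsum hN d (b + (a + N - b)) := by
        refine goodb _ (by omega) (by omega)
      have h2 : Tsum hN d a ≤ Tsum hN d (a + (b - a)) := gooda _ (by omega) (by omega)
      have e1 : b + (a + N - b) = a + N := by omega
      have e2 : a + (b - a) = b := by omega
      rw [e1, Tsum_add_N hN d sumd] at h1
      rw [e2] at h2
      omega
    rcases lt_trichotomy j' j₀ with h | h | h
    · exact absurd (key j' j₀ h hj₀N hgood' hgood₀) not_false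
    · exact h
    · exact absurd (key j₀ j' h hj'N hgood₀ hgood') not_false


lemma chi_rotFn {N D : ℕ} (hN : 0 < N) (j : ℕ) (d : Fin N → Fin (D+1)) (k : Fin (D+1)) :
    chi D N (rotFn hN j d) k = chi D N d k := by
  have h : rotFn hN j d = d ∘ (rotEquiv hN j) := rfl
  rw [h, chi_comp_equiv]

lemma sum_val_eq_sum_chi (D N : ℕ) (d : Fin N → Fin (D+1)) :
    ∑ i, (d i : ℕ) = ∑ k : Fin (D+1), (k : ℕ) * chi D N d k := by
  rw [← Finset.sum_fiberwise Finset.univ d (fun i => (d i : ℕ))]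
  refine Finset.sum_congr rfl fun k _ => ?_
  have h : ∀ i ∈ Finset.univ.filter (fun i => d i = k), (d i : ℕ) = (k : ℕ) := by
    intro i hi; rw [(Finset.mem_filter.mp hi).2]
  rw [Finset.sum_congr rfl h, Finset.sum_const, smul_eq_mul, chi, Nat.mul_comm]

lemma mod_inv_inv {N : ℕ} (j : ℕ) (hj : j < N) : (N - (N - j) % N) % N = j := by
  rcases Nat.eq_zero_or_pos j with rfl | hj0
  · simp
  · have ha : (N - j) % N = N - j := Nat.mod_eq_of_lt (by omega)
    rw [ha]
    have hb : N - (N - j) = j := by omega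
    rw [hb]
    exact Nat.mod_eq_of_lt hj

lemma mem_trees_iff {D N : ℕ} (d : Fin N → Fin (D+1)) :
    d ∈ Trees D N ↔ IsTreeSeq D N d := by
  classical
  rw [Trees, Finset.mem_filter]
  simp

/-- the number of plane trees on `N` vertices with exactly `n_k`
vertices of branching degree `k` is `(1/N)·N!/(n_0!⋯n_D!)`, i.e.
`N · #{d ∈ 𝕋_N(D) : χ(d) = n} = N!/(n_0!⋯n_D!)`. -/
theorem stmt4 (D : ℕ) (hD : 2 ≤ D) (N : ℕ) (hN : 1 ≤ N)
    (n : Fin (D+1) → ℕ)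
    (h1 : ∑ k, n k = N)
    (h2 : ∑ k : Fin (D+1), (k : ℕ) * n k = N - 1) :
    N * ((Trees D N).filter (fun d => ∀ k, chi D N d k = n k)).card =
      Nat.factorial N / ∏ k, Nat.factorial (n k) := by
  have hN0 : 0 < N := hN
  set B := (Trees D N).filter (fun d => ∀ k, chi D N d k = n k) with hB
  set A := Finset.univ.filter (fun d : Fin N → Fin (D+1) => ∀ k, chi D N d k = n k) with hA
  have hsumA : ∀ d : Fin N → Fin (D+1), (∀ k, chi D N d k = n k) →
      ∑ i, (d i : ℕ) = N - 1 := by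
    intro d hd
    rw [sum_val_eq_sum_chi, ← h2]
    exact Finset.sum_congr rfl fun k _ => by rw [hd k]
  have hABcard : (Finset.range N ×ˢ B).card = A.card := by
    refine Finset.card_bij (fun p _ => rotFn hN0 p.1 p.2) ?_ ?_ ?_
    · rintro ⟨j, t⟩ hp
      rw [Finset.mem_product] at hp
      obtain ⟨hj, ht⟩ := hp
      rw [hB, Finset.mem_filter] at ht
      rw [hA, Finset.mem_filter]
      exact ⟨Finset.mem_univ _, fun k => by rw [chi_rotFn, ht.2 k]⟩
    · rintro ⟨j, t⟩ hp ⟨j', t'⟩ hp' heq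
      rw [Finset.mem_product, Finset.mem_range] at hp hp'
      obtain ⟨hj, ht⟩ := hp
      obtain ⟨hj', ht'⟩ := hp'
      rw [hB, Finset.mem_filter] at ht ht'
      have htree := (mem_trees_iff t).mp ht.1
      have htree' := (mem_trees_iff t').mp ht'.1
      simp only at heq
      set dd := rotFn hN0 j t with hdd
      have hsum : ∑ i, (dd i : ℕ) = N - 1 := by
        rw [hdd, sum_rotFn]; exact htree.1
      obtain ⟨u, -, huniq⟩ := cycle_lemma hN0 dd hsum
      have e1 : rotFn hN0 ((N - j) % N) dd = t := by
        rw [hdd, rotFn_inv hN0 (le_of_lt hj)]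
      have e1' : rotFn hN0 ((N - j') % N) dd = t' := by
        rw [heq, rotFn_inv hN0 (le_of_lt hj')]
      have m1 : (N - j) % N = u :=
        huniq _ ⟨Nat.mod_lt _ hN0, by rw [e1]; exact htree⟩
      have m1' : (N - j') % N = u :=
        huniq _ ⟨Nat.mod_lt _ hN0, by rw [e1']; exact htree'⟩
      have hjj : j = j' := by
        have := m1.trans m1'.symm
        calc j = (N - (N - j) % N) % N := (mod_inv_inv j hj).symm
          _ = (N - (N - j') % N) % N := by rw [this]
          _ = j' := mod_inv_inv j' hj'
      have htt : t = t' := by rw [← e1, ← e1', m1, m1']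
      exact Prod.ext hjj htt
    · intro d hd
      rw [hA, Finset.mem_filter] at hd
      have hchi := hd.2
      have hsum := hsumA d hchi
      obtain ⟨u, ⟨huN, htree⟩, -⟩ := cycle_lemma hN0 d hsum
      refine ⟨((N - u) % N, rotFn hN0 u d), ?_, ?_⟩
      · rw [Finset.mem_product, Finset.mem_range]
        refine ⟨Nat.mod_lt _ hN0, ?_⟩
        rw [hB, Finset.mem_filter]
        exact ⟨(mem_trees_iff _).mpr htree, fun k => by rw [chi_rotFn, hchi k]⟩
      · exact rotFn_inv hN0 (le_of_lt huN) d
  have hcount := card_chi_filter_mul D N n h1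
  rw [← hA] at hcount
  rw [← hABcard, Finset.card_product, Finset.card_range] at hcount
  refine (Nat.div_eq_of_eq_mul_left (Finset.prod_pos fun k _ => Nat.factorial_pos _) ?_).symm
  rw [← hcount]
end

section
/- The exponential growth rate of the partition function equals minus the minimal free energy: lim_{N→∞} (1/N) ln Z_N = −min_{p∈M} J(p). -/
open Finset Filter MeasureTheory

namespace Stmt6Aux


variable {D N : ℕ}

lemma sum_chi (d : Fin N → Fin (D+1)) : ∑ k, chi D N d k = N := by
  classical
  have := Finset.card_eq_sum_card_fiberwise (f := d) (s := univ) (t := univ) (fun x _ => mem_univ _)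
  simpa [chi] using this.symm

lemma sum_comp_eq {M : Type*} [AddCommMonoid M] (d : Fin N → Fin (D+1)) (g : Fin (D+1) → M) :
    ∑ i, g (d i) = ∑ k, (chi D N d k) • g k := by
  classical
  rw [← Finset.sum_fiberwise univ d (fun i => g (d i))]
  refine Finset.sum_congr rfl fun k _ => ?_
  rw [Finset.sum_congr rfl (fun i hi => by rw [(Finset.mem_filter.mp hi).2]), Finset.sum_const]
  rfl

lemma prod_comp_eq {M : Type*} [CommMonoid M] (d : Fin N → Fin (D+1)) (g : Fin (D+1) → M) :
    ∏ i, g (d i) = ∏ k, (g k) ^ (chi D N d k) := by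
  classical
  rw [← Finset.prod_fiberwise univ d (fun i => g (d i))]
  refine Finset.prod_congr rfl fun k _ => ?_
  rw [Finset.prod_congr rfl (fun i hi => by rw [(Finset.mem_filter.mp hi).2]), Finset.prod_const]
  rfl

lemma chi_comp_equiv (d : Fin N → Fin (D+1)) (π : Equiv.Perm (Fin N)) (k : Fin (D+1)) :
    chi D N (d ∘ π) k = chi D N d k := by
  classical
  unfold chi
  refine Finset.card_bij' (fun i _ => π i) (fun j _ => π.symm j) ?_ ?_ ?_ ?_ <;>
    simp [Function.comp]



variable {D N : ℕ}

lemma chi_snoc (n : ℕ) (f : Fin n → Fin (D+1)) (x : Fin (D+1)) (k : Fin (D+1)) :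
    chi D (n+1) (Fin.snoc f x) k = chi D n f k + if x = k then 1 else 0 := by
  classical
  unfold chi
  rw [Finset.card_filter, Finset.card_filter, Fin.sum_univ_castSucc]
  simp

lemma exists_fn_of_type : ∀ (N : ℕ) (t : Fin (D+1) → ℕ), (∑ k, t k = N) →
    ∃ d0 : Fin N → Fin (D+1), ∀ k, chi D N d0 k = t k := by
  intro N
  induction N with
  | zero =>
    intro t ht
    refine ⟨Fin.elim0, fun k => ?_⟩
    have h0 : t k = 0 := by
      have := (Finset.sum_eq_zero_iff.mp ht) k (mem_univ k)
      exact this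
    simp [chi, h0]
  | succ n ih =>
    intro t ht
    have hex : ∃ k0, t k0 ≠ 0 := by
      by_contra h
      push_neg at h
      rw [Finset.sum_eq_zero (fun k _ => h k)] at ht
      omega
    obtain ⟨k0, hk0⟩ := hex
    set t' : Fin (D+1) → ℕ := Function.update t k0 (t k0 - 1) with ht'
    have hsum' : ∑ k, t' k = n := by
      rw [ht', Finset.sum_update_of_mem (mem_univ k0)]
      have h1 : t k0 + ∑ x ∈ univ.erase k0, t x = ∑ x, t x :=
        Finset.add_sum_erase univ t (mem_univ k0)
      rw [Finset.sdiff_singleton_eq_erase]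
      omega
    obtain ⟨d0', hd0'⟩ := ih t' hsum'
    refine ⟨Fin.snoc d0' k0, fun k => ?_⟩
    rw [chi_snoc, hd0']
    by_cases hk : k0 = k
    · subst hk; simp [ht', Function.update_self]; omega
    · rw [ht']
      rw [Function.update_of_ne (fun h => hk h.symm)]
      simp [hk]

lemma factorial_le_card_seq (t : Fin (D+1) → ℕ) (ht : ∑ k, t k = N) :
    Nat.factorial N ≤ (∏ k, Nat.factorial (t k)) *
      (univ.filter (fun d : Fin N → Fin (D+1) => chi D N d = t)).card := by
  classical
  obtain ⟨d0, hd0⟩ := exists_fn_of_type N t ht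
  set F : Equiv.Perm (Fin N) → (Fin N → Fin (D+1)) := fun σ => d0 ∘ σ with hF
  -- fibers of F have card ≤ ∏ Nat.factorial (t k)
  have hstab : (univ.filter (fun τ : Equiv.Perm (Fin N) => d0 ∘ τ = d0)).card
      ≤ ∏ k, Nat.factorial (t k) := by
    have hcard : (univ.filter (fun τ : Equiv.Perm (Fin N) => d0 ∘ ⇑τ = d0)).card
        = Fintype.card {τ : Equiv.Perm (Fin N) // d0 ∘ ⇑τ = d0} := by
      rw [Fintype.card_subtype]
    rw [hcard]
    have hinj : Function.Injective
        (fun (τ : {τ : Equiv.Perm (Fin N) // d0 ∘ ⇑τ = d0}) =>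
          (fun k : Fin (D+1) =>
            Equiv.Perm.subtypePerm τ.1 (p := fun i => d0 i = k)
              (fun x => by
                have hx : d0 (τ.1 x) = d0 x := congrFun τ.2 x
                show d0 (τ.1 x) = k ↔ d0 x = k
                rw [hx]))) := by
      intro τ1 τ2 h
      refine Subtype.ext (Equiv.ext fun x => ?_)
      have := congrFun h (d0 x)
      have := congrFun (congrArg (fun (e : Equiv.Perm {i : Fin N // d0 i = d0 x}) => (e : {i : Fin N // d0 i = d0 x} → _)) this) ⟨x, rfl⟩
      exact congrArg Subtype.val this
    calc Fintype.card {τ : Equiv.Perm (Fin N) // d0 ∘ ⇑τ = d0}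
        ≤ Fintype.card (∀ k : Fin (D+1), Equiv.Perm {i : Fin N // d0 i = k}) :=
          Fintype.card_le_of_injective _ hinj
      _ = ∏ k, Nat.factorial (t k) := by
          rw [Fintype.card_pi]
          refine Finset.prod_congr rfl fun k _ => ?_
          rw [Fintype.card_perm, Fintype.card_subtype]
          rw [show (univ.filter fun i => d0 i = k).card = chi D N d0 k from rfl, hd0]
  have hmain := Finset.card_le_mul_card_image (f := F) (univ : Finset (Equiv.Perm (Fin N)))
    (∏ k, Nat.factorial (t k)) (fun e he => by
      obtain ⟨σ0, _, hσ0⟩ := Finset.mem_image.mp he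
      refine le_trans (Finset.card_le_card_of_injOn (fun σ => σ * σ0⁻¹) ?_ ?_) hstab
      · intro σ hσ
        simp only [Finset.mem_coe, mem_filter, mem_univ, true_and] at hσ ⊢
        funext x
        have h1 : d0 (σ (σ0⁻¹ x)) = e (σ0⁻¹ x) := congrFun hσ (σ0⁻¹ x)
        have h2 : e (σ0⁻¹ x) = d0 (σ0 (σ0⁻¹ x)) := (congrFun hσ0 (σ0⁻¹ x)).symm
        simp only [Function.comp, Equiv.Perm.mul_apply]
        rw [h1, h2]
        simp
      · intro a _ b _ hab
        exact mul_right_cancel hab)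
  have himg : (univ.image F).card
      ≤ (univ.filter (fun d : Fin N → Fin (D+1) => chi D N d = t)).card := by
    refine Finset.card_le_card fun e he => ?_
    obtain ⟨σ, _, hσ⟩ := Finset.mem_image.mp he
    rw [mem_filter]
    refine ⟨mem_univ _, funext fun k => ?_⟩
    rw [← hσ, chi_comp_equiv, hd0]
  calc Nat.factorial N = (univ : Finset (Equiv.Perm (Fin N))).card := by
        rw [Finset.card_univ, Fintype.card_perm, Fintype.card_fin]
    _ ≤ (∏ k, Nat.factorial (t k)) * (univ.image F).card := hmain
    _ ≤ (∏ k, Nat.factorial (t k)) *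
        (univ.filter (fun d : Fin N → Fin (D+1) => chi D N d = t)).card := by
        exact Nat.mul_le_mul_left _ himg



lemma exp_one_le_aux (n : ℕ) (hn : 1 ≤ n) : ((n:ℝ)+1)^n ≤ Real.exp 1 * (n:ℝ)^n := by
  have hn' : (0:ℝ) < n := by exact_mod_cast hn
  have h1 : ((n:ℝ)+1) ≤ (n:ℝ) * Real.exp (1/n) := by
    have := Real.add_one_le_exp (1/(n:ℝ))
    calc ((n:ℝ)+1) = (n:ℝ) * (1/n + 1) := by field_simp; ring
    _ ≤ (n:ℝ) * Real.exp (1/n) := by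
        exact mul_le_mul_of_nonneg_left this (le_of_lt hn')
  calc ((n:ℝ)+1)^n ≤ ((n:ℝ) * Real.exp (1/n))^n := by
        exact pow_le_pow_left₀ (by positivity) h1 n
    _ = (n:ℝ)^n * Real.exp (1/n) ^ n := mul_pow _ _ _
    _ = (n:ℝ)^n * Real.exp 1 := by
        rw [← Real.exp_nat_mul]
        congr 1
        field_simp
    _ = Real.exp 1 * (n:ℝ)^n := mul_comm _ _

lemma exp_mul_pow_le (n : ℕ) (hn : 1 ≤ n) :
    Real.exp 1 * (n:ℝ)^(n+1) ≤ ((n:ℝ)+1)^(n+1) := by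
  have hn' : (0:ℝ) < n := by exact_mod_cast hn
  have key : (n:ℝ) * Real.exp (1/((n:ℝ)+1)) ≤ (n:ℝ)+1 := by
    have h2 := Real.add_one_le_exp (-(1/((n:ℝ)+1)))
    have h3 : (n:ℝ)/((n:ℝ)+1) ≤ Real.exp (-(1/((n:ℝ)+1))) := by
      calc (n:ℝ)/((n:ℝ)+1) = -(1/((n:ℝ)+1)) + 1 := by field_simp; ring
        _ ≤ _ := h2
    have h4 := mul_le_mul_of_nonneg_right h3 (le_of_lt (Real.exp_pos (1/((n:ℝ)+1))))
    rw [← Real.exp_add] at h4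
    simp only [neg_add_cancel, Real.exp_zero] at h4
    calc (n:ℝ) * Real.exp (1/((n:ℝ)+1))
        = ((n:ℝ)/((n:ℝ)+1) * Real.exp (1/((n:ℝ)+1))) * ((n:ℝ)+1) := by field_simp
      _ ≤ 1 * ((n:ℝ)+1) := by
          apply mul_le_mul_of_nonneg_right h4 (by positivity)
      _ = (n:ℝ)+1 := one_mul _
  calc Real.exp 1 * (n:ℝ)^(n+1)
      = ((n:ℝ) * Real.exp (1/((n:ℝ)+1)))^(n+1) := by
        rw [mul_pow, ← Real.exp_nat_mul]
        have : ((n:ℕ)+1 : ℝ) ≠ 0 := by positivity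
        rw [mul_comm]
        congr 1
        push_cast
        field_simp
    _ ≤ ((n:ℝ)+1)^(n+1) := pow_le_pow_left₀ (by positivity) key _

lemma pow_le_exp_factorial (n : ℕ) : (n:ℝ)^n ≤ Real.exp n * Nat.factorial n := by
  induction n with
  | zero => simp
  | succ n ih =>
    rcases Nat.eq_zero_or_pos n with h|h
    · subst h
      simpa using le_trans (by norm_num) (Real.add_one_le_exp 1)
    · have step := exp_one_le_aux n h
      have hpos : (0:ℝ) ≤ (n:ℝ)+1 := by positivity
      push_cast
      calc ((n:ℝ)+1)^(n+1) = ((n:ℝ)+1) * ((n:ℝ)+1)^n := by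
            ring
        _ ≤ ((n:ℝ)+1) * (Real.exp 1 * (n:ℝ)^n) := by
            exact mul_le_mul_of_nonneg_left step hpos
        _ ≤ ((n:ℝ)+1) * (Real.exp 1 * (Real.exp n * Nat.factorial n)) := by
            refine mul_le_mul_of_nonneg_left (mul_le_mul_of_nonneg_left ih ?_) hpos
            positivity
        _ = Real.exp (n+1) * (((n:ℝ)+1) * Nat.factorial n) := by
            rw [Real.exp_add]; ring
        _ = Real.exp ((n:ℝ)+1) * ((Nat.factorial (n+1) : ℕ) : ℝ) := by
            rw [Nat.factorial_succ]
            push_cast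
            ring

lemma factorial_mul_exp_le (n : ℕ) (hn : 1 ≤ n) :
    (Nat.factorial n : ℝ) * Real.exp n ≤ Real.exp 1 * n * (n:ℝ)^n := by
  induction n with
  | zero => omega
  | succ n ih =>
    rcases Nat.eq_zero_or_pos n with h|h
    · subst h; simp
    · have ihh := ih h
      have step := exp_mul_pow_le n h
      push_cast
      calc ((Nat.factorial (n+1) : ℕ):ℝ) * Real.exp ((n:ℝ)+1)
          = ((n:ℝ)+1) * ((Nat.factorial n : ℝ) * Real.exp n) * Real.exp 1 := by
            rw [Nat.factorial_succ, Real.exp_add]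
            push_cast
            ring
        _ ≤ ((n:ℝ)+1) * (Real.exp 1 * n * (n:ℝ)^n) * Real.exp 1 := by
            refine mul_le_mul_of_nonneg_right (mul_le_mul_of_nonneg_left ihh (by positivity)) ?_
            positivity
        _ = ((n:ℝ)+1) * Real.exp 1 * (Real.exp 1 * (n:ℝ)^(n+1)) := by ring
        _ ≤ ((n:ℝ)+1) * Real.exp 1 * ((n:ℝ)+1)^(n+1) := by
            refine mul_le_mul_of_nonneg_left step (by positivity)
        _ = Real.exp 1 * ((n:ℝ)+1) * ((n:ℝ)+1)^(n+1) := by ring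


lemma hamil_eq (c : Fin (D+1) → ℝ) (d : Fin N → Fin (D+1)) :
    Hamil D N c d = ∑ k, (chi D N d k : ℝ) * c k := by
  unfold Hamil
  rw [sum_comp_eq d c]
  exact Finset.sum_congr rfl fun k _ => by rw [nsmul_eq_mul]

lemma sum_val_eq (d : Fin N → Fin (D+1)) :
    (∑ i, ((d i : ℕ))) = ∑ k, chi D N d k * (k : ℕ) := by
  rw [sum_comp_eq d (fun k : Fin (D+1) => (k : ℕ))]
  exact Finset.sum_congr rfl fun k _ => by rw [smul_eq_mul]

lemma sum_mul_log_eq (hN : 0 < N) (t : Fin (D+1) → ℕ) :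
    -(N:ℝ) * entropyFn D (fun k => (t k:ℝ)/N) = ∑ k, (t k : ℝ) * Real.log ((t k:ℝ)/N) := by
  have hN' : ((N:ℝ)) ≠ 0 := by positivity
  unfold entropyFn
  rw [neg_mul, mul_neg, neg_neg, Finset.mul_sum]
  refine Finset.sum_congr rfl fun k _ => ?_
  beta_reduce
  rw [← mul_assoc, mul_div_cancel₀ _ hN']

lemma prod_pow_eq_exp (hN : 0 < N) (t : Fin (D+1) → ℕ) :
    ∏ k, ((t k : ℝ)/N)^(t k) = Real.exp (-(N:ℝ) * entropyFn D (fun k => (t k:ℝ)/N)) := by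
  rw [sum_mul_log_eq hN t, Real.exp_sum]
  refine Finset.prod_congr rfl fun k _ => ?_
  rcases Nat.eq_zero_or_pos (t k) with h|h
  · simp [h]
  · have hx : (0:ℝ) < (t k:ℝ)/N := by
      have h1 : (0:ℝ) < (t k : ℝ) := by exact_mod_cast h
      have h2 : (0:ℝ) < (N : ℝ) := by exact_mod_cast hN
      positivity
    rw [Real.exp_nat_mul, Real.exp_log hx]

lemma card_seq_le_exp (hN : 0 < N) (t : Fin (D+1) → ℕ) (ht : ∑ k, t k = N) :
    ((univ.filter (fun d : Fin N → Fin (D+1) => chi D N d = t)).card : ℝ)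
      ≤ Real.exp ((N:ℝ) * entropyFn D (fun k => (t k:ℝ)/N)) := by
  classical
  have hN' : (0:ℝ) < (N:ℝ) := by exact_mod_cast hN
  have key : ((univ.filter (fun d : Fin N → Fin (D+1) => chi D N d = t)).card : ℝ)
      * ∏ k, ((t k : ℝ)/N)^(t k) ≤ 1 := by
    have hone : (1:ℝ) = ∑ d : Fin N → Fin (D+1), ∏ i, ((t (d i) : ℝ)/N) := by
      have h1 := Finset.prod_univ_sum (fun _ : Fin N => (univ : Finset (Fin (D+1))))
        (fun _ k => ((t k : ℝ)/N))
      rw [Fintype.piFinset_univ] at h1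
      rw [← h1]
      have h2 : ∑ k : Fin (D+1), ((t k:ℝ)/N) = 1 := by
        rw [← Finset.sum_div]
        rw [show ∑ k, ((t k : ℝ)) = ((∑ k, t k : ℕ) : ℝ) by push_cast; rfl, ht]
        field_simp
      rw [Finset.prod_congr rfl fun i _ => h2, Finset.prod_const, one_pow]
    rw [hone]
    calc ((univ.filter (fun d : Fin N → Fin (D+1) => chi D N d = t)).card : ℝ)
        * ∏ k, ((t k : ℝ)/N)^(t k)
        = ∑ d ∈ univ.filter (fun d : Fin N → Fin (D+1) => chi D N d = t),
            ∏ i, ((t (d i) : ℝ)/N) := by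
          rw [Finset.sum_congr rfl (fun d hd => by
            rw [prod_comp_eq d (fun k => (t k : ℝ)/N), (Finset.mem_filter.mp hd).2]),
            Finset.sum_const, nsmul_eq_mul]
      _ ≤ ∑ d : Fin N → Fin (D+1), ∏ i, ((t (d i) : ℝ)/N) := by
          refine Finset.sum_le_sum_of_subset_of_nonneg (Finset.filter_subset _ _) ?_
          intro d _ _
          exact Finset.prod_nonneg fun i _ => by positivity
  rw [prod_pow_eq_exp hN t] at key
  have hE := Real.exp_pos (-(N:ℝ) * entropyFn D (fun k => (t k:ℝ)/N))
  have h3 := (le_div_iff₀ hE).mpr key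
  rwa [one_div, ← Real.exp_neg, neg_mul, neg_neg] at h3

lemma exp_le_card_seq (hN : 1 ≤ N) (t : Fin (D+1) → ℕ) (ht : ∑ k, t k = N) :
    Real.exp ((N:ℝ) * entropyFn D (fun k => (t k:ℝ)/N))
      ≤ (Real.exp 1 * N)^(D+1) *
        ((univ.filter (fun d : Fin N → Fin (D+1) => chi D N d = t)).card : ℝ) := by
  classical
  have hN0 : 0 < N := hN
  have hN' : (0:ℝ) < (N:ℝ) := by exact_mod_cast hN0
  set S : ℝ := ((univ.filter (fun d : Fin N → Fin (D+1) => chi D N d = t)).card : ℝ) with hS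
  have hSnn : 0 ≤ S := by positivity
  set P : ℝ := ∏ k, ((t k : ℝ))^(t k) with hP
  have hPpos : 0 < P := Finset.prod_pos fun k _ => by
    rcases Nat.eq_zero_or_pos (t k) with h|h
    · simp [h]
    · have h1 : (0:ℝ) < (t k : ℝ) := by exact_mod_cast h
      positivity
  have h1 : (∏ k, ((t k:ℝ)/N)^(t k)) * (N:ℝ)^N = P := by
    have hNpow : ((N:ℝ))^N = ∏ k, ((N:ℝ))^(t k) := by
      rw [Finset.prod_pow_eq_pow_sum, ht]
    rw [hP, hNpow, ← Finset.prod_mul_distrib]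
    refine Finset.prod_congr rfl fun k _ => ?_
    rw [← mul_pow, div_mul_cancel₀ _ (ne_of_gt hN')]
  have hkey : Real.exp ((N:ℝ) * entropyFn D (fun k => (t k:ℝ)/N)) * P = (N:ℝ)^N := by
    rw [← h1, prod_pow_eq_exp hN0 t, ← mul_assoc, ← Real.exp_add]
    rw [show (N:ℝ) * entropyFn D (fun k => (t k:ℝ)/N)
        + -(N:ℝ) * entropyFn D (fun k => (t k:ℝ)/N) = 0 by ring, Real.exp_zero, one_mul]
  have hfac : (∏ k, ((Nat.factorial (t k) : ℝ))) * Real.exp N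
      = ∏ k, ((Nat.factorial (t k):ℝ) * Real.exp (t k)) := by
    rw [Finset.prod_mul_distrib, ← Real.exp_sum]
    congr 2
    rw [show ∑ k, ((t k : ℝ)) = ((∑ k, t k : ℕ) : ℝ) by push_cast; rfl, ht]
  have hone_le : (1:ℝ) ≤ Real.exp 1 * N := by
    have h2 : (1:ℝ) ≤ Real.exp 1 := by
      have := Real.add_one_le_exp (1:ℝ); linarith
    have h3 : (1:ℝ) ≤ (N:ℝ) := by exact_mod_cast hN
    nlinarith
  have hbound : ∏ k, ((Nat.factorial (t k):ℝ) * Real.exp (t k))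
      ≤ ∏ k, (Real.exp 1 * N * ((t k:ℝ))^(t k)) := by
    refine Finset.prod_le_prod (fun k _ => by positivity) (fun k _ => ?_)
    have htk : t k ≤ N := ht ▸ Finset.single_le_sum (fun i _ => Nat.zero_le _) (mem_univ k)
    rcases Nat.eq_zero_or_pos (t k) with h|h
    · simpa [h] using hone_le
    · calc (Nat.factorial (t k):ℝ) * Real.exp (t k)
          ≤ Real.exp 1 * (t k) * ((t k:ℝ))^(t k) := factorial_mul_exp_le (t k) h
        _ ≤ Real.exp 1 * N * ((t k:ℝ))^(t k) := by
            have h4 : ((t k:ℝ)) ≤ (N:ℝ) := by exact_mod_cast htk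
            have h5 : (0:ℝ) ≤ ((t k:ℝ))^(t k) := by positivity
            have h6 : (0:ℝ) < Real.exp 1 := Real.exp_pos 1
            exact mul_le_mul_of_nonneg_right
              (mul_le_mul_of_nonneg_left h4 h6.le) h5
  have hsplit : ∏ k, (Real.exp 1 * N * ((t k:ℝ))^(t k)) = (Real.exp 1 * N)^(D+1) * P := by
    rw [Finset.prod_mul_distrib, Finset.prod_const, hP]
    congr 2
    simp
  have hcount : (Nat.factorial N : ℝ) ≤ (∏ k, ((Nat.factorial (t k)):ℝ)) * S := by
    have := factorial_le_card_seq t ht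
    rw [hS]
    exact_mod_cast this
  have main : Real.exp ((N:ℝ) * entropyFn D (fun k => (t k:ℝ)/N)) * P
      ≤ ((Real.exp 1 * N)^(D+1) * S) * P := by
    rw [hkey]
    calc (N:ℝ)^N ≤ Real.exp N * Nat.factorial N := pow_le_exp_factorial N
      _ ≤ Real.exp N * ((∏ k, ((Nat.factorial (t k)):ℝ)) * S) :=
          mul_le_mul_of_nonneg_left hcount (le_of_lt (Real.exp_pos _))
      _ = ((∏ k, ((Nat.factorial (t k)):ℝ)) * Real.exp N) * S := by ring
      _ ≤ ((Real.exp 1 * N)^(D+1) * P) * S := by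
          refine mul_le_mul_of_nonneg_right ?_ hSnn
          rw [hfac, ← hsplit]
          exact hbound
      _ = ((Real.exp 1 * N)^(D+1) * S) * P := by ring
  exact le_of_mul_le_mul_right main hPpos

/-- Rotation of a sequence. -/
def rot {D N : ℕ} (d : Fin N → Fin (D+1)) (r : ℕ) : Fin N → Fin (D+1) :=
  fun j => d ⟨(r + j.val) % N, Nat.mod_lt _ j.pos⟩

lemma rot_rot {D N : ℕ} (d : Fin N → Fin (D+1)) (s : ℕ) (hs : s ≤ N) :
    rot (rot d s) (N - s) = d := by
  funext j
  unfold rot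
  have h1 : (s + (N - s + j.val) % N) % N = (s + (N - s + j.val)) % N := by
    simp [Nat.add_mod]
  have h2 : (s + (N - s + j.val)) % N = j.val % N := by
    rw [show s + (N - s + j.val) = N + j.val by omega, Nat.add_mod_left]
  have h3 : j.val % N = j.val := Nat.mod_eq_of_lt j.isLt
  congr 1
  apply Fin.ext
  simp only []
  rw [h1, h2, h3]

lemma chi_rot {D N : ℕ} (d : Fin N → Fin (D+1)) (r : ℕ) (k : Fin (D+1)) :
    chi D N (rot d r) k = chi D N d k := by
  rcases Nat.eq_zero_or_pos N with h|hN
  · subst h; simp [chi]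
  have hinj : Function.Injective
      (fun j : Fin N => (⟨(r + j.val) % N, Nat.mod_lt _ hN⟩ : Fin N)) := by
    intro i j hij
    simp only [Fin.mk.injEq] at hij
    have h1 : r + i.val ≡ r + j.val [MOD N] := hij
    have h2 : i.val ≡ j.val [MOD N] := Nat.ModEq.add_left_cancel' r h1
    unfold Nat.ModEq at h2
    rw [Nat.mod_eq_of_lt i.isLt, Nat.mod_eq_of_lt j.isLt] at h2
    exact Fin.ext h2
  have hbij := Finite.injective_iff_bijective.mp hinj
  have hrw : rot d r = d ∘ ⇑(Equiv.ofBijective _ hbij) := rfl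
  rw [hrw, chi_comp_equiv]

lemma sum_filter_lt {N : ℕ} (hN : 0 < N) (gg : ℕ → ℕ) (m : ℕ) (hm : m ≤ N) :
    ∑ i ∈ univ.filter (fun i : Fin N => (i:ℕ) < m), gg i.val = ∑ j ∈ range m, gg j := by
  refine Finset.sum_nbij' (fun i => i.val) (fun j => (⟨j % N, Nat.mod_lt _ hN⟩ : Fin N))
    ?_ ?_ ?_ ?_ ?_
  · intro a ha
    rw [mem_range]
    exact (Finset.mem_filter.mp ha).2
  · intro a ha
    rw [mem_range] at ha
    rw [Finset.mem_filter]
    refine ⟨mem_univ _, ?_⟩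
    simp only []
    rwa [Nat.mod_eq_of_lt (lt_of_lt_of_le ha hm)]
  · intro a _
    apply Fin.ext
    simp only []
    exact Nat.mod_eq_of_lt a.isLt
  · intro a ha
    rw [mem_range] at ha
    simp only []
    exact Nat.mod_eq_of_lt (lt_of_lt_of_le ha hm)
  · intro a _; rfl

lemma exists_rot_tree {D N : ℕ} (hN : 0 < N) (d : Fin N → Fin (D+1))
    (hsum : ∑ i, ((d i : ℕ)) = N - 1) :
    ∃ s, 1 ≤ s ∧ s ≤ N ∧ IsTreeSeq D N (rot d s) := by
  classical
  set a : ℕ → ℕ := fun j => ((d ⟨j % N, Nat.mod_lt j hN⟩ : Fin (D+1)) : ℕ) with ha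
  set S : ℕ → ℕ := fun m => ∑ j ∈ range m, a j with hSdef
  have hSN : S N = N - 1 := by
    rw [hSdef]
    simp only []
    rw [← Fin.sum_univ_eq_sum_range a N, ← hsum]
    refine Finset.sum_congr rfl fun i _ => ?_
    rw [ha]
    simp only []
    congr 2
    apply Fin.ext
    simp [Nat.mod_eq_of_lt i.isLt]
  have hSsplit : ∀ p m, S (p + m) = S p + ∑ j ∈ range m, a (p + j) := by
    intro p m
    induction m with
    | zero => simp
    | succ m ih =>
      rw [show p + (m+1) = (p+m)+1 by omega, hSdef]
      simp only []
      rw [Finset.sum_range_succ, Finset.sum_range_succ]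
      rw [hSdef] at ih
      simp only [] at ih
      omega
  have haper : ∀ j, a (N + j) = a j := by
    intro j
    rw [ha]
    simp only []
    exact congrArg Fin.val (congrArg d (Fin.ext (Nat.add_mod_left N j)))
  have hSadd : ∀ m, S (N + m) = S N + S m := by
    intro m
    rw [hSsplit N m, hSdef]
    simp only []
    congr 1
    exact Finset.sum_congr rfl fun j _ => haper j
  set G : ℕ → ℤ := fun m => (S m : ℤ) - m with hG
  have hTne : ((range (N+1)).image G).Nonempty :=
    (Finset.nonempty_range_iff.mpr (by omega)).image G
  set μ : ℤ := ((range (N+1)).image G).min' hTne with hμ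
  have hmin : ∀ r, r ≤ N → μ ≤ G r := fun r hr =>
    Finset.min'_le _ _ (Finset.mem_image_of_mem G (mem_range.mpr (by omega)))
  have hexQ : ∃ m, m ≤ N ∧ G m = μ := by
    have hmem := Finset.min'_mem _ hTne
    rw [Finset.mem_image] at hmem
    obtain ⟨m, hm, hm2⟩ := hmem
    rw [mem_range] at hm
    exact ⟨m, by omega, hm2⟩
  set s := Nat.find hexQ with hs
  obtain ⟨hsN, hGs⟩ := Nat.find_spec hexQ
  rw [← hs] at hsN hGs
  have hstrict : ∀ r, r < s → r ≤ N → μ < G r := by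
    intro r hr hrN
    rw [hs] at hr
    have h1 := Nat.find_min hexQ hr
    push_neg at h1
    have h2 := hmin r hrN
    have h3 := h1 hrN
    omega
  have hGN : G N = -1 := by
    simp only [hG]
    rw [hSN]
    omega
  have hS0 : S 0 = 0 := by rw [hSdef]; simp
  have hμle : μ ≤ -1 := by
    have := hmin N le_rfl
    omega
  have hs1 : 1 ≤ s := by
    rcases Nat.eq_zero_or_pos s with h|h
    · exfalso
      rw [h] at hGs
      simp only [hG] at hGs
      rw [hS0] at hGs
      omega
    · exact h
  have hcast : ∀ i : Fin N, ((rot d s i : Fin (D+1)) : ℕ) = a (s + i.val) := by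
    intro i
    rfl
  refine ⟨s, hs1, hsN, ?_, ?_⟩
  · -- total sum
    have h4 : ∑ i, ((rot d s i : Fin (D+1)) : ℕ) = ∑ j ∈ range N, a (s + j) := by
      rw [Finset.sum_congr rfl (fun i _ => hcast i)]
      exact Fin.sum_univ_eq_sum_range (fun x => a (s + x)) N
    have h5 := hSsplit s N
    have h6 := hSadd s
    rw [show N + s = s + N by omega] at h6
    rw [h4]
    omega
  · intro m hm1 hmN
    have h4 : ∑ i ∈ univ.filter (fun i : Fin N => (i:ℕ) < m), ((rot d s i : Fin (D+1)) : ℕ)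
        = ∑ j ∈ range m, a (s + j) := by
      rw [Finset.sum_congr rfl (fun i _ => hcast i)]
      exact sum_filter_lt hN (fun x => a (s + x)) m (le_of_lt hmN)
    rw [h4]
    have h6 : S (s+m) = S s + ∑ j ∈ range m, a (s + j) := hSsplit s m
    rcases le_or_gt (s+m) N with hc|hc
    · have h7 := hmin (s+m) hc
      simp only [hG] at hGs h7
      omega
    · set r := s + m - N with hr
      have h8 : μ < G r := hstrict r (by omega) (by omega)
      have h9 : S (s+m) = S N + S r := by
        rw [show s + m = N + r by omega]
        exact hSadd r
      simp only [hG] at hGs h8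
      omega

lemma card_seq_le_mul_trees {D N : ℕ} (hN : 0 < N) (t : Fin (D+1) → ℕ)
    (htdeg : ∑ k, t k * (k:ℕ) = N - 1) :
    (univ.filter (fun d : Fin N → Fin (D+1) => chi D N d = t)).card
      ≤ N * ((Trees D N).filter (fun d => chi D N d = t)).card := by
  classical
  set Seqt := univ.filter (fun d : Fin N → Fin (D+1) => chi D N d = t) with hSeqt
  have hdsum : ∀ d ∈ Seqt, ∑ i, ((d i : ℕ)) = N - 1 := by
    intro d hd
    rw [sum_val_eq d, (Finset.mem_filter.mp hd).2]
    exact htdeg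
  set Φ : (Fin N → Fin (D+1)) → (Fin N → Fin (D+1)) := fun d =>
    if h : ∑ i, ((d i : ℕ)) = N - 1 then
      rot d (Classical.choose (exists_rot_tree hN d h)) else d with hΦ
  have hmain := Finset.card_le_mul_card_image (f := Φ) Seqt N (fun e he => by
    refine le_trans (Finset.card_le_card (t := (range N).image (fun r => rot e r)) ?_)
      (le_trans Finset.card_image_le (by simp))
    intro x hx
    rw [Finset.mem_filter] at hx
    obtain ⟨hx1, hx2⟩ := hx
    have hxsum := hdsum x hx1
    rw [hΦ] at hx2
    simp only [hxsum, dif_pos] at hx2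
    obtain ⟨hc1, hc2, _⟩ := Classical.choose_spec (exists_rot_tree hN x hxsum)
    set sx := Classical.choose (exists_rot_tree hN x hxsum) with hsx
    rw [Finset.mem_image]
    refine ⟨N - sx, mem_range.mpr (by omega), ?_⟩
    rw [← hx2, rot_rot x sx hc2])
  have himg : (Seqt.image Φ).card ≤ ((Trees D N).filter (fun d => chi D N d = t)).card := by
    refine Finset.card_le_card fun e he => ?_
    obtain ⟨x, hx, hxe⟩ := Finset.mem_image.mp he
    rw [Finset.mem_filter] at hx ⊢
    have hxsum := hdsum x (Finset.mem_filter.mpr hx)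
    rw [hΦ] at hxe
    simp only [hxsum, dif_pos] at hxe
    obtain ⟨hc1, hc2, hc3⟩ := Classical.choose_spec (exists_rot_tree hN x hxsum)
    constructor
    · rw [Trees, Finset.mem_filter]
      exact ⟨mem_univ _, hxe ▸ hc3⟩
    · rw [← hxe]
      funext k
      rw [chi_rot]
      exact congrFun hx.2 k
  calc Seqt.card ≤ N * (Seqt.image Φ).card := hmain
    _ ≤ N * ((Trees D N).filter (fun d => chi D N d = t)).card :=
        Nat.mul_le_mul_left _ himg

lemma energy_scale {D N : ℕ} (hN : 0 < N) (c : Fin (D+1) → ℝ) (t : Fin (D+1) → ℕ) :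
    (N:ℝ) * energyFn D c (fun k => (t k:ℝ)/N) = ∑ k, (t k:ℝ) * c k := by
  have hN' : ((N:ℝ)) ≠ 0 := by positivity
  unfold energyFn
  rw [Finset.mul_sum]
  refine Finset.sum_congr rfl fun k _ => ?_
  beta_reduce
  rw [← mul_assoc, mul_div_cancel₀ _ hN']

lemma exp_negJ_eq {D N : ℕ} (hN : 0 < N) (β : ℝ) (c : Fin (D+1) → ℝ) (t : Fin (D+1) → ℕ) :
    Real.exp (-(N:ℝ) * Jfun D β c (fun k => (t k:ℝ)/N))
      = Real.exp ((N:ℝ) * entropyFn D (fun k => (t k:ℝ)/N))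
        * Real.exp (-β * ∑ k, (t k:ℝ) * c k) := by
  rw [← Real.exp_add]
  congr 1
  rw [← energy_scale hN c t]
  unfold Jfun
  ring

lemma tree_chi_sum {D N : ℕ} (d : Fin N → Fin (D+1)) (hd : d ∈ Trees D N) :
    ∑ k, chi D N d k * (k:ℕ) = N - 1 := by
  classical
  rw [← sum_val_eq d]
  rw [Trees, Finset.mem_filter] at hd
  exact hd.2.1

lemma hamil_of_chi_eq {D N : ℕ} (c : Fin (D+1) → ℝ) (d : Fin N → Fin (D+1))
    (t : Fin (D+1) → ℕ) (hd : chi D N d = t) :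
    Hamil D N c d = ∑ k, (t k:ℝ) * c k := by
  rw [hamil_eq c d, hd]

lemma Zpart_le_sum {D N : ℕ} (hN : 0 < N) (β : ℝ) (c : Fin (D+1) → ℝ) :
    Zpart D N β c ≤ ∑ t ∈ (Trees D N).image (chi D N),
      Real.exp (-(N:ℝ) * Jfun D β c (fun k => (t k:ℝ)/N)) := by
  classical
  unfold Zpart
  rw [← Finset.sum_fiberwise_of_maps_to (g := chi D N)
    (fun d hd => Finset.mem_image_of_mem _ hd)]
  refine Finset.sum_le_sum fun t ht => ?_
  obtain ⟨d0, hd0T, hd0⟩ := Finset.mem_image.mp ht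
  have htsum : ∑ k, t k = N := by rw [← hd0]; exact sum_chi d0
  calc ∑ d ∈ (Trees D N).filter (fun d => chi D N d = t), Real.exp (-β * Hamil D N c d)
      = (((Trees D N).filter (fun d => chi D N d = t)).card : ℝ)
          * Real.exp (-β * ∑ k, (t k:ℝ) * c k) := by
        rw [Finset.sum_congr rfl (fun d hd => by
          rw [hamil_of_chi_eq c d t (Finset.mem_filter.mp hd).2]), Finset.sum_const,
          nsmul_eq_mul]
    _ ≤ Real.exp ((N:ℝ) * entropyFn D (fun k => (t k:ℝ)/N))
          * Real.exp (-β * ∑ k, (t k:ℝ) * c k) := by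
        refine mul_le_mul_of_nonneg_right ?_ (le_of_lt (Real.exp_pos _))
        refine le_trans ?_ (card_seq_le_exp hN t htsum)
        have hsub : (Trees D N).filter (fun d => chi D N d = t)
            ⊆ univ.filter (fun d : Fin N → Fin (D+1) => chi D N d = t) := by
          intro x hx
          rw [Finset.mem_filter] at hx ⊢
          exact ⟨mem_univ _, hx.2⟩
        exact_mod_cast Nat.cast_le.mpr (Finset.card_le_card hsub)
    _ = Real.exp (-(N:ℝ) * Jfun D β c (fun k => (t k:ℝ)/N)) := (exp_negJ_eq hN β c t).symm

lemma card_types_le {D N : ℕ} :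
    ((Trees D N).image (chi D N)).card ≤ (N+1)^(D+1) := by
  classical
  have hmap : ∀ t ∈ (Trees D N).image (chi D N), ∀ k, t k ≤ N := by
    intro t ht k
    obtain ⟨d0, _, hd0⟩ := Finset.mem_image.mp ht
    rw [← hd0]
    calc chi D N d0 k ≤ ∑ k', chi D N d0 k' :=
        Finset.single_le_sum (fun _ _ => Nat.zero_le _) (mem_univ k)
      _ = N := sum_chi d0
  have hinj : Set.InjOn (fun (t : Fin (D+1) → ℕ) (k : Fin (D+1)) =>
      (⟨min (t k) N, by omega⟩ : Fin (N+1))) ((Trees D N).image (chi D N)) := by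
    intro t1 h1 t2 h2 h12
    funext k
    have := congrFun h12 k
    simp only [Fin.mk.injEq] at this
    rw [min_eq_left (hmap t1 h1 k), min_eq_left (hmap t2 h2 k)] at this
    exact this
  calc ((Trees D N).image (chi D N)).card
      ≤ (univ : Finset (Fin (D+1) → Fin (N+1))).card :=
        Finset.card_le_card_of_injOn _ (fun _ _ => mem_univ _) hinj
    _ = (N+1)^(D+1) := by
        rw [Finset.card_univ, Fintype.card_fun]
        simp

lemma exp_le_Zpart {D N : ℕ} (hN : 1 ≤ N) (β : ℝ) (c : Fin (D+1) → ℝ) (t : Fin (D+1) → ℕ)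
    (htsum : ∑ k, t k = N) (htdeg : ∑ k, t k * (k:ℕ) = N - 1) :
    Real.exp (-(N:ℝ) * Jfun D β c (fun k => (t k:ℝ)/N))
      ≤ (Real.exp 1 * N)^(D+1) * N * Zpart D N β c := by
  classical
  have hN0 : 0 < N := hN
  set cardT := ((Trees D N).filter (fun d => chi D N d = t)).card with hcT
  have h1 : (univ.filter (fun d : Fin N → Fin (D+1) => chi D N d = t)).card ≤ N * cardT :=
    card_seq_le_mul_trees hN0 t htdeg
  have h2 := exp_le_card_seq hN t htsum
  have h3 : Real.exp ((N:ℝ) * entropyFn D (fun k => (t k:ℝ)/N))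
      ≤ (Real.exp 1 * N)^(D+1) * (N * cardT) := by
    refine le_trans h2 ?_
    refine mul_le_mul_of_nonneg_left ?_ (by positivity)
    exact_mod_cast Nat.cast_le.mpr h1
  have hsum_eq : ∑ d ∈ (Trees D N).filter (fun d => chi D N d = t),
      Real.exp (-β * Hamil D N c d)
      = (cardT : ℝ) * Real.exp (-β * ∑ k, (t k:ℝ) * c k) := by
    rw [Finset.sum_congr rfl (fun d hd => by
      rw [hamil_of_chi_eq c d t (Finset.mem_filter.mp hd).2]), Finset.sum_const,
      nsmul_eq_mul]
  have h4 : (cardT : ℝ) * Real.exp (-β * ∑ k, (t k:ℝ) * c k) ≤ Zpart D N β c := by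
    unfold Zpart
    calc (cardT : ℝ) * Real.exp (-β * ∑ k, (t k:ℝ) * c k)
        = ∑ d ∈ (Trees D N).filter (fun d => chi D N d = t), Real.exp (-β * Hamil D N c d) :=
          hsum_eq.symm
      _ ≤ ∑ d ∈ Trees D N, Real.exp (-β * Hamil D N c d) := by
          refine Finset.sum_le_sum_of_subset_of_nonneg (Finset.filter_subset _ _) ?_
          intro d _ _
          exact le_of_lt (Real.exp_pos _)
  rw [exp_negJ_eq hN0 β c t]
  calc Real.exp ((N:ℝ) * entropyFn D (fun k => (t k:ℝ)/N))
        * Real.exp (-β * ∑ k, (t k:ℝ) * c k)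
      ≤ ((Real.exp 1 * N)^(D+1) * (N * cardT)) * Real.exp (-β * ∑ k, (t k:ℝ) * c k) :=
        mul_le_mul_of_nonneg_right h3 (le_of_lt (Real.exp_pos _))
    _ = (Real.exp 1 * N)^(D+1) * N * ((cardT:ℝ) * Real.exp (-β * ∑ k, (t k:ℝ) * c k)) := by
        ring
    _ ≤ (Real.exp 1 * N)^(D+1) * N * Zpart D N β c := by
        refine mul_le_mul_of_nonneg_left h4 (by positivity)

lemma contJ {D : ℕ} (β : ℝ) (c : Fin (D+1) → ℝ) : Continuous (Jfun D β c) := by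
  unfold Jfun entropyFn energyFn
  refine Continuous.sub ?_ ?_
  · exact continuous_const.mul (continuous_finset_sum _ (fun k _ =>
      ((continuous_apply k).mul continuous_const)))
  · exact (continuous_finset_sum _ (fun k _ =>
      (Real.continuous_mul_log.comp (continuous_apply k)))).neg

lemma val_one_eq {D : ℕ} (hD : 2 ≤ D) : ((1 : Fin (D+1)) : ℕ) = 1 := by
  rw [Fin.val_one']
  exact Nat.mod_eq_of_lt (by omega)

lemma zero_ne_one_fin {D : ℕ} (hD : 2 ≤ D) : (0 : Fin (D+1)) ≠ 1 := by
  intro h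
  have h2 := congrArg Fin.val h
  rw [val_one_eq hD] at h2
  simp at h2

lemma type_sum {D N : ℕ} (t : Fin (D+1) → ℕ) (ht : t ∈ (Trees D N).image (chi D N)) :
    ∑ k, t k = N := by
  obtain ⟨d0, _, hd0⟩ := Finset.mem_image.mp ht
  rw [← hd0]; exact sum_chi d0

lemma type_deg {D N : ℕ} (t : Fin (D+1) → ℕ) (ht : t ∈ (Trees D N).image (chi D N)) :
    ∑ k, t k * (k:ℕ) = N - 1 := by
  obtain ⟨d0, hd0T, hd0⟩ := Finset.mem_image.mp ht
  rw [← hd0]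
  exact tree_chi_sum d0 hd0T

lemma type_le {D N : ℕ} (t : Fin (D+1) → ℕ) (ht : t ∈ (Trees D N).image (chi D N))
    (k : Fin (D+1)) : t k ≤ N := by
  have := type_sum t ht
  calc t k ≤ ∑ k', t k' := Finset.single_le_sum (fun _ _ => Nat.zero_le _) (mem_univ k)
    _ = N := this

lemma type_zero_pos {D N : ℕ} (hN : 1 ≤ N) (t : Fin (D+1) → ℕ)
    (ht : t ∈ (Trees D N).image (chi D N)) : 1 ≤ t 0 := by
  have hsum := type_sum t ht
  have hdeg := type_deg t ht
  by_contra h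
  push_neg at h
  have ht0 : t 0 = 0 := by omega
  have hle : ∑ k, t k ≤ ∑ k, t k * (k:ℕ) := by
    refine Finset.sum_le_sum fun k _ => ?_
    rcases Nat.eq_zero_or_pos (k : ℕ) with hk|hk
    · have : k = 0 := Fin.ext hk
      rw [this, ht0]
      omega
    · calc t k = t k * 1 := (mul_one _).symm
        _ ≤ t k * (k:ℕ) := Nat.mul_le_mul_left _ hk
  omega

lemma type_one_le {D N : ℕ} (hD : 2 ≤ D) (hN : 1 ≤ N) (t : Fin (D+1) → ℕ)
    (ht : t ∈ (Trees D N).image (chi D N)) : t 1 + 1 ≤ N := by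
  have hdeg := type_deg t ht
  have h1 : t 1 * ((1 : Fin (D+1)) : ℕ) ≤ ∑ k, t k * (k:ℕ) :=
    Finset.single_le_sum (f := fun k : Fin (D+1) => t k * (k:ℕ))
      (fun _ _ => Nat.zero_le _) (mem_univ 1)
  rw [val_one_eq hD, mul_one] at h1
  omega

lemma sum_div_eq_one {D N : ℕ} (hN : 1 ≤ N) (t : Fin (D+1) → ℕ)
    (htsum : ∑ k, t k = N) : ∑ k : Fin (D+1), (t k : ℝ)/N = 1 := by
  have hNR' : ((N:ℝ)) ≠ 0 := by
    have : (0:ℝ) < N := by exact_mod_cast hN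
    exact ne_of_gt this
  rw [← Finset.sum_div,
    show ∑ k, ((t k : ℝ)) = ((∑ k, t k : ℕ) : ℝ) by push_cast; rfl, htsum]
  field_simp

lemma mean_div_eq {D N : ℕ} (hN : 1 ≤ N) (t : Fin (D+1) → ℕ)
    (htdeg : ∑ k, t k * (k:ℕ) = N - 1) :
    ∑ k : Fin (D+1), ((k:ℕ):ℝ) * ((t k : ℝ)/N) = ((N:ℝ) - 1)/N := by
  have hcongr : ∀ k : Fin (D+1), ((k:ℕ):ℝ) * ((t k : ℝ)/N) = ((t k * (k:ℕ) : ℕ) : ℝ)/N := by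
    intro k
    push_cast
    ring
  rw [Finset.sum_congr rfl fun k _ => hcongr k, ← Finset.sum_div,
    show ∑ k, ((t k * (k:ℕ) : ℕ) : ℝ) = ((∑ k, t k * (k:ℕ) : ℕ) : ℝ) by push_cast; rfl,
    htdeg]
  congr 1
  push_cast [Nat.cast_sub hN]
  ring

noncomputable def qproj (D N : ℕ) (t : Fin (D+1) → ℕ) : Fin (D+1) → ℝ := fun k =>
  (t k : ℝ)/N + (if k = 1 then (1:ℝ)/N else 0) - (if k = 0 then (1:ℝ)/N else 0)

lemma proj_mem_Mset {D N : ℕ} (hD : 2 ≤ D) (hN : 1 ≤ N) (t : Fin (D+1) → ℕ)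
    (htsum : ∑ k, t k = N) (htdeg : ∑ k, t k * (k:ℕ) = N - 1)
    (ht0 : 1 ≤ t 0) (ht1 : t 1 + 1 ≤ N) (htle : ∀ k, t k ≤ N) :
    qproj D N t ∈ Mset D := by
  have hNR : (0:ℝ) < N := by exact_mod_cast hN
  have h01 : (0 : Fin (D+1)) ≠ 1 := zero_ne_one_fin hD
  refine ⟨fun k => ?_, ?_, ?_⟩
  · show qproj D N t k ∈ Set.Icc (0:ℝ) 1
    unfold qproj
    by_cases hk0 : k = 0
    · subst hk0
      rw [if_neg h01, if_pos rfl, add_zero, div_sub_div_same]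
      constructor
      · apply div_nonneg _ hNR.le
        have h2 : (1:ℝ) ≤ (t 0 : ℝ) := by exact_mod_cast ht0
        linarith
      · rw [div_le_one hNR]
        have h2 : ((t 0 : ℝ)) ≤ N := by exact_mod_cast htle 0
        linarith
    · by_cases hk1 : k = 1
      · subst hk1
        rw [if_pos rfl, if_neg (fun h => h01 h.symm), sub_zero, ← add_div]
        constructor
        · positivity
        · rw [div_le_one hNR]
          have h2 : ((t 1 : ℝ)) + 1 ≤ N := by exact_mod_cast ht1
          linarith
      · rw [if_neg hk1, if_neg hk0, add_zero, sub_zero]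
        constructor
        · positivity
        · rw [div_le_one hNR]
          exact_mod_cast htle k
  · show ∑ k, qproj D N t k = 1
    unfold qproj
    rw [Finset.sum_sub_distrib, Finset.sum_add_distrib]
    rw [sum_div_eq_one hN t htsum]
    simp
  · show ∑ k : Fin (D+1), ((k:ℕ):ℝ) * qproj D N t k = 1
    unfold qproj
    have hexp : ∀ k : Fin (D+1), ((k:ℕ):ℝ) * ((t k : ℝ)/N + (if k = 1 then (1:ℝ)/N else 0)
        - (if k = 0 then (1:ℝ)/N else 0))
        = ((k:ℕ):ℝ) * ((t k : ℝ)/N) + (if k = 1 then ((k:ℕ):ℝ) * ((1:ℝ)/N) else 0)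
          - (if k = 0 then ((k:ℕ):ℝ) * ((1:ℝ)/N) else 0) := by
      intro k
      by_cases hk0 : k = 0
      · subst hk0
        rw [if_neg h01, if_neg h01, if_pos rfl, if_pos rfl]
        ring
      · by_cases hk1 : k = 1
        · subst hk1
          rw [if_pos rfl, if_pos rfl, if_neg (fun h => h01 h.symm),
            if_neg (fun h => h01 h.symm)]
          ring
        · rw [if_neg hk1, if_neg hk0, if_neg hk1, if_neg hk0]
          ring
    rw [Finset.sum_congr rfl fun k _ => hexp k, Finset.sum_sub_distrib,
      Finset.sum_add_distrib, mean_div_eq hN t htdeg]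
    simp only [Finset.sum_ite_eq', Finset.mem_univ, if_true]
    rw [val_one_eq hD]
    simp only [Fin.val_zero, Nat.cast_zero, Nat.cast_one, zero_mul, one_mul, sub_zero]
    field_simp
    ring

lemma J_lower_eventually {D : ℕ} (hD : 2 ≤ D) (β : ℝ) (c : Fin (D+1) → ℝ)
    (pstar : Fin (D+1) → ℝ) (hmin : ∀ q ∈ Mset D, Jfun D β c pstar ≤ Jfun D β c q)
    {ε : ℝ} (hε : 0 < ε) :
    ∃ N0 : ℕ, 1 ≤ N0 ∧ ∀ N, N0 ≤ N → ∀ t ∈ (Trees D N).image (chi D N),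
      Jfun D β c pstar - ε ≤ Jfun D β c (fun k => (t k : ℝ)/N) := by
  classical
  set K : Set (Fin (D+1) → ℝ) := Set.pi Set.univ (fun _ => Set.Icc (0:ℝ) 1) with hK
  have hKcomp : IsCompact K := isCompact_univ_pi (fun _ => isCompact_Icc)
  have hUC := hKcomp.uniformContinuousOn_of_continuous ((contJ β c).continuousOn)
  rw [Metric.uniformContinuousOn_iff] at hUC
  obtain ⟨δ, hδ, hUC2⟩ := hUC ε hε
  obtain ⟨N0, hN0⟩ := exists_nat_gt (1/δ)
  refine ⟨max N0 1, le_max_right _ _, fun N hN t ht => ?_⟩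
  have hN1 : 1 ≤ N := le_trans (le_max_right N0 1) hN
  have hNR : (0:ℝ) < N := by exact_mod_cast hN1
  have htsum := type_sum t ht
  have htdeg := type_deg t ht
  have htle := type_le t ht
  have ht0 := type_zero_pos hN1 t ht
  have ht1 := type_one_le hD hN1 t ht
  have h01 : (0 : Fin (D+1)) ≠ 1 := zero_ne_one_fin hD
  have hqM := proj_mem_Mset hD hN1 t htsum htdeg ht0 ht1 htle
  have hpK : (fun k : Fin (D+1) => (t k : ℝ)/N) ∈ K := by
    rw [hK]
    intro k _
    constructor
    · positivity
    · rw [div_le_one hNR]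
      exact_mod_cast htle k
  have hqK : qproj D N t ∈ K := by
    rw [hK]
    intro k _
    exact hqM.1 k
  have hdist : dist (fun k : Fin (D+1) => (t k : ℝ)/N) (qproj D N t) < δ := by
    have hbound : ∀ k : Fin (D+1), dist ((t k : ℝ)/N) (qproj D N t k) ≤ 1/N := by
      intro k
      rw [Real.dist_eq]
      unfold qproj
      by_cases hk0 : k = 0
      · subst hk0
        rw [if_neg h01, if_pos rfl, add_zero,
          show (t 0:ℝ)/N - ((t 0:ℝ)/N - 1/N) = 1/N by ring,
          abs_of_nonneg (by positivity)]
      · by_cases hk1 : k = 1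
        · subst hk1
          rw [if_pos rfl, if_neg (fun h => h01 h.symm), sub_zero,
            show (t 1:ℝ)/N - ((t 1:ℝ)/N + 1/N) = -(1/N) by ring, abs_neg,
            abs_of_nonneg (by positivity)]
        · rw [if_neg hk1, if_neg hk0, add_zero, sub_zero, sub_self, abs_zero]
          positivity
    have h2 : dist (fun k : Fin (D+1) => (t k : ℝ)/N) (qproj D N t) ≤ 1/N :=
      dist_pi_le_iff (by positivity) |>.mpr hbound
    have h4 : (N0:ℝ) ≤ N := by exact_mod_cast le_trans (le_max_left N0 1) hN
    have h5 : 1/δ < (N:ℝ) := lt_of_lt_of_le hN0 h4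
    rw [div_lt_iff₀ hδ] at h5
    have h3 : (1:ℝ)/N < δ := by
      rw [div_lt_iff₀ hNR]
      linarith [mul_comm (N:ℝ) δ]
    linarith
  have hJ := hUC2 _ hpK _ hqK hdist
  rw [Real.dist_eq, abs_lt] at hJ
  have hJq := hmin _ hqM
  linarith [hJ.1, hJ.2]

/-- Indices `k ≥ 2`. -/
def hiSet (D : ℕ) : Finset (Fin (D+1)) := univ.filter (fun k => 2 ≤ (k:ℕ))

noncomputable def fflo (D : ℕ) (p : Fin (D+1) → ℝ) (N : ℕ) (k : Fin (D+1)) : ℕ :=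
  ⌊((N:ℝ) - D) * p k⌋₊

noncomputable def Aval (D : ℕ) (p : Fin (D+1) → ℝ) (N : ℕ) : ℕ :=
  ∑ k ∈ hiSet D, (k:ℕ) * fflo D p N k

noncomputable def Bval (D : ℕ) (p : Fin (D+1) → ℝ) (N : ℕ) : ℕ :=
  ∑ k ∈ hiSet D, ((k:ℕ) - 1) * fflo D p N k

noncomputable def tcons (D : ℕ) (p : Fin (D+1) → ℝ) (N : ℕ) : Fin (D+1) → ℕ := fun k =>
  if 2 ≤ (k:ℕ) then fflo D p N k
  else if (k:ℕ) = 1 then N - 1 - Aval D p N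
  else 1 + Bval D p N

lemma lowSet_eq {D : ℕ} (hD : 2 ≤ D) :
    univ.filter (fun k : Fin (D+1) => ¬ 2 ≤ (k:ℕ)) = {0, 1} := by
  ext k
  simp only [Finset.mem_filter, mem_univ, true_and, Finset.mem_insert, Finset.mem_singleton]
  constructor
  · intro h
    push_neg at h
    interval_cases hk : (k:ℕ)
    · left; exact Fin.ext (by simp [hk])
    · right
      refine Fin.ext ?_
      rw [hk, val_one_eq hD]
  · intro h
    rcases h with h|h <;> subst h
    · simp
    · rw [val_one_eq hD]; omega

lemma tcons_zero {D : ℕ} (hD : 2 ≤ D) (p : Fin (D+1) → ℝ) (N : ℕ) :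
    tcons D p N 0 = 1 + Bval D p N := by
  unfold tcons
  rw [if_neg (by simp), if_neg (by simp)]

lemma tcons_one {D : ℕ} (hD : 2 ≤ D) (p : Fin (D+1) → ℝ) (N : ℕ) :
    tcons D p N 1 = N - 1 - Aval D p N := by
  unfold tcons
  rw [if_neg (by rw [val_one_eq hD]; omega), if_pos (val_one_eq hD)]

lemma tcons_hi {D : ℕ} (p : Fin (D+1) → ℝ) (N : ℕ) (k : Fin (D+1)) (hk : 2 ≤ (k:ℕ)) :
    tcons D p N k = fflo D p N k := by
  unfold tcons
  rw [if_pos hk]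

lemma sigma2_le {D : ℕ} (p : Fin (D+1) → ℝ) (hp : p ∈ Mset D) :
    ∑ k ∈ hiSet D, ((k:ℕ):ℝ) * p k ≤ 1 := by
  obtain ⟨hpI, hps, hpm⟩ := hp
  rw [← hpm]
  refine Finset.sum_le_sum_of_subset_of_nonneg (Finset.subset_univ _) ?_
  intro k _ _
  exact mul_nonneg (by positivity) (hpI k).1

lemma Aval_le {D N : ℕ} (p : Fin (D+1) → ℝ) (hp : p ∈ Mset D) (hN : D ≤ N) :
    Aval D p N ≤ N - D := by
  have hND : (0:ℝ) ≤ (N:ℝ) - D := by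
    have : (D:ℝ) ≤ N := by exact_mod_cast hN
    linarith
  have h1 : ((Aval D p N : ℕ) : ℝ) ≤ ((N:ℝ) - D) := by
    calc ((Aval D p N : ℕ) : ℝ)
        = ∑ k ∈ hiSet D, ((k:ℕ):ℝ) * ((fflo D p N k : ℕ):ℝ) := by
          unfold Aval; push_cast; rfl
      _ ≤ ∑ k ∈ hiSet D, ((k:ℕ):ℝ) * (((N:ℝ) - D) * p k) := by
          refine Finset.sum_le_sum fun k _ => ?_
          refine mul_le_mul_of_nonneg_left ?_ (by positivity)
          exact Nat.floor_le (mul_nonneg hND (hp.1 k).1)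
      _ = ((N:ℝ) - D) * ∑ k ∈ hiSet D, ((k:ℕ):ℝ) * p k := by
          rw [Finset.mul_sum]
          exact Finset.sum_congr rfl fun k _ => by ring
      _ ≤ ((N:ℝ) - D) * 1 := mul_le_mul_of_nonneg_left (sigma2_le p hp) hND
      _ = (N:ℝ) - D := mul_one _
  have h2 : ((N:ℝ) - D) = ((N - D : ℕ) : ℝ) := by
    rw [Nat.cast_sub hN]
  rw [h2] at h1
  exact_mod_cast h1

lemma Bval_add_F {D N : ℕ} (p : Fin (D+1) → ℝ) :
    Bval D p N + ∑ k ∈ hiSet D, fflo D p N k = Aval D p N := by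
  unfold Bval Aval
  rw [← Finset.sum_add_distrib]
  refine Finset.sum_congr rfl fun k hk => ?_
  have h2 : 2 ≤ (k:ℕ) := (Finset.mem_filter.mp hk).2
  have : ((k:ℕ) - 1) * fflo D p N k + fflo D p N k = (k:ℕ) * fflo D p N k := by
    have h3 : ((k:ℕ) - 1) + 1 = (k:ℕ) := by omega
    calc ((k:ℕ) - 1) * fflo D p N k + fflo D p N k
        = (((k:ℕ) - 1) + 1) * fflo D p N k := by ring
      _ = (k:ℕ) * fflo D p N k := by rw [h3]
  exact this

lemma tcons_spec {D N : ℕ} (hD : 2 ≤ D) (p : Fin (D+1) → ℝ) (hp : p ∈ Mset D)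
    (hN : D + 1 ≤ N) :
    (∑ k, tcons D p N k = N) ∧ (∑ k, tcons D p N k * (k:ℕ) = N - 1) := by
  have hAle : Aval D p N ≤ N - D := Aval_le p hp (by omega)
  have hBF := Bval_add_F (N := N) p
  have hBF2 : Bval D p N + (hiSet D).sum (fflo D p N) = Aval D p N := hBF
  have hNA : Aval D p N + D ≤ N := by omega
  have h01 := zero_ne_one_fin hD
  constructor
  · rw [← Finset.sum_filter_add_sum_filter_not univ (fun k : Fin (D+1) => 2 ≤ (k:ℕ))]
    rw [lowSet_eq hD, Finset.sum_pair h01, tcons_zero hD, tcons_one hD]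
    rw [Finset.sum_congr rfl (fun k hk => tcons_hi p N k (Finset.mem_filter.mp hk).2)]
    have : (Finset.filter (fun k : Fin (D+1) => 2 ≤ (k:ℕ)) univ) = hiSet D := rfl
    rw [this]
    omega
  · rw [← Finset.sum_filter_add_sum_filter_not univ (fun k : Fin (D+1) => 2 ≤ (k:ℕ))]
    rw [lowSet_eq hD, Finset.sum_pair h01, tcons_zero hD, tcons_one hD]
    rw [Finset.sum_congr rfl (fun k hk => by
      rw [tcons_hi p N k (Finset.mem_filter.mp hk).2, mul_comm])]
    have hfil : (Finset.filter (fun k : Fin (D+1) => 2 ≤ (k:ℕ)) univ) = hiSet D := rfl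
    rw [hfil]
    have hA : ∑ k ∈ hiSet D, (k:ℕ) * fflo D p N k = Aval D p N := rfl
    rw [hA]
    simp only [Fin.val_zero, mul_zero, val_one_eq hD, mul_one]
    omega

lemma fflo_div_tendsto (D : ℕ) (p : ℝ) (hp0 : 0 ≤ p) :
    Tendsto (fun N : ℕ => ((⌊((N:ℝ) - D) * p⌋₊ : ℕ) : ℝ)/N) atTop (nhds p) := by
  have h1 : Tendsto (fun N : ℕ => 1/(N:ℝ)) atTop (nhds 0) :=
    tendsto_one_div_atTop_nhds_zero_nat
  have hlow : Tendsto (fun N : ℕ => p - ((D:ℝ)*p)*(1/N) - 1/N) atTop (nhds p) := by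
    have h2 := ((tendsto_const_nhds (x := p) (f := atTop (α := ℕ))).sub
      (h1.const_mul ((D:ℝ)*p))).sub h1
    simpa using h2
  have hup : Tendsto (fun N : ℕ => p - ((D:ℝ)*p)*(1/N)) atTop (nhds p) := by
    have h2 := (tendsto_const_nhds (x := p) (f := atTop (α := ℕ))).sub
      (h1.const_mul ((D:ℝ)*p))
    simpa using h2
  refine tendsto_of_tendsto_of_tendsto_of_le_of_le' hlow hup ?_ ?_
  · refine Filter.eventually_atTop.mpr ⟨D + 1, fun N hN => ?_⟩
    have hNpos : (0:ℝ) < N := by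
      have h2 : (1:ℕ) ≤ N := by omega
      exact_mod_cast Nat.lt_of_lt_of_le Nat.zero_lt_one h2
    have heq : p - ((D:ℝ)*p)*(1/N) - 1/N = (((N:ℝ) - D) * p - 1)/N := by
      field_simp
    rw [heq]
    have hle : ((N:ℝ) - D) * p - 1 ≤ (⌊((N:ℝ) - D) * p⌋₊ : ℝ) :=
      le_of_lt (Nat.sub_one_lt_floor _)
    gcongr
  · refine Filter.eventually_atTop.mpr ⟨D + 1, fun N hN => ?_⟩
    have hNpos : (0:ℝ) < N := by
      have h2 : (1:ℕ) ≤ N := by omega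
      exact_mod_cast Nat.lt_of_lt_of_le Nat.zero_lt_one h2
    have hND : (0:ℝ) ≤ (N:ℝ) - D := by
      have h2 : (D:ℝ) ≤ N := by exact_mod_cast le_trans (Nat.le_succ D) hN
      linarith
    have heq : p - ((D:ℝ)*p)*(1/N) = (((N:ℝ) - D) * p)/N := by
      field_simp
    rw [heq]
    have hle : (⌊((N:ℝ) - D) * p⌋₊ : ℝ) ≤ ((N:ℝ) - D) * p :=
      Nat.floor_le (mul_nonneg hND hp0)
    gcongr

lemma Mset_facts {D : ℕ} (hD : 2 ≤ D) (p : Fin (D+1) → ℝ) (hp : p ∈ Mset D) :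
    p 1 = 1 - ∑ k ∈ hiSet D, ((k:ℕ):ℝ) * p k ∧
    p 0 = ∑ k ∈ hiSet D, (((k:ℕ):ℝ) - 1) * p k := by
  obtain ⟨hpI, hps, hpm⟩ := hp
  have h01 := zero_ne_one_fin hD
  rw [← Finset.sum_filter_add_sum_filter_not univ (fun k : Fin (D+1) => 2 ≤ (k:ℕ)),
    lowSet_eq hD, Finset.sum_pair h01] at hps hpm
  have hfil : (Finset.filter (fun k : Fin (D+1) => 2 ≤ (k:ℕ)) univ) = hiSet D := rfl
  rw [hfil] at hps hpm
  rw [Fin.val_zero, val_one_eq hD] at hpm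
  simp only [Nat.cast_zero, Nat.cast_one, zero_mul, one_mul] at hpm
  have hsub : ∑ k ∈ hiSet D, (((k:ℕ):ℝ) - 1) * p k
      = (∑ k ∈ hiSet D, ((k:ℕ):ℝ) * p k) - ∑ k ∈ hiSet D, p k := by
    rw [← Finset.sum_sub_distrib]
    exact Finset.sum_congr rfl fun k _ => by ring
  constructor
  · linarith
  · rw [hsub]
    linarith

lemma tcons_tendsto {D : ℕ} (hD : 2 ≤ D) (p : Fin (D+1) → ℝ) (hp : p ∈ Mset D)
    (k : Fin (D+1)) :
    Tendsto (fun N : ℕ => ((tcons D p N k : ℕ) : ℝ)/N) atTop (nhds (p k)) := by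
  have h1 : Tendsto (fun N : ℕ => 1/(N:ℝ)) atTop (nhds 0) :=
    tendsto_one_div_atTop_nhds_zero_nat
  have hAtend : Tendsto (fun N : ℕ => ((Aval D p N : ℕ):ℝ)/N) atTop
      (nhds (∑ j ∈ hiSet D, ((j:ℕ):ℝ) * p j)) := by
    have heq : ∀ N : ℕ, ((Aval D p N : ℕ):ℝ)/N
        = ∑ j ∈ hiSet D, ((j:ℕ):ℝ) * (((fflo D p N j : ℕ):ℝ)/N) := by
      intro N
      unfold Aval
      push_cast
      rw [Finset.sum_div]
      exact Finset.sum_congr rfl fun j _ => by ring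
    rw [funext heq]
    exact tendsto_finset_sum _ (fun j _ =>
      (fflo_div_tendsto D (p j) (hp.1 j).1).const_mul _)
  have hBtend : Tendsto (fun N : ℕ => ((Bval D p N : ℕ):ℝ)/N) atTop
      (nhds (∑ j ∈ hiSet D, (((j:ℕ):ℝ) - 1) * p j)) := by
    have heq : ∀ N : ℕ, ((Bval D p N : ℕ):ℝ)/N
        = ∑ j ∈ hiSet D, (((j:ℕ):ℝ) - 1) * (((fflo D p N j : ℕ):ℝ)/N) := by
      intro N
      unfold Bval
      rw [Nat.cast_sum, Finset.sum_div]
      refine Finset.sum_congr rfl fun j hj => ?_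
      have h2 : 2 ≤ (j:ℕ) := (Finset.mem_filter.mp hj).2
      push_cast [Nat.cast_sub (show 1 ≤ (j:ℕ) by omega)]
      ring
    rw [funext heq]
    exact tendsto_finset_sum _ (fun j _ =>
      (fflo_div_tendsto D (p j) (hp.1 j).1).const_mul _)
  rcases le_or_gt 2 (k:ℕ) with hk|hk
  · have heq : ∀ N : ℕ, ((tcons D p N k : ℕ):ℝ)/N = ((fflo D p N k : ℕ):ℝ)/N := by
      intro N
      rw [tcons_hi p N k hk]
    rw [funext heq]
    exact fflo_div_tendsto D (p k) (hp.1 k).1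
  · obtain ⟨hp1, hp0⟩ := Mset_facts hD p hp
    by_cases hk1 : (k:ℕ) = 1
    · have hkk : k = 1 := by
        apply Fin.ext
        rw [val_one_eq hD, hk1]
      subst hkk
      have hcongr : ∀ᶠ N : ℕ in atTop,
          1 - 1/(N:ℝ) - ((Aval D p N : ℕ):ℝ)/N = ((tcons D p N 1 : ℕ):ℝ)/N := by
        refine Filter.eventually_atTop.mpr ⟨D + 1, fun N hN => ?_⟩
        have hA := Aval_le p hp (by omega : D ≤ N)
        have hNpos : (0:ℝ) < N := by
          have h2 : (1:ℕ) ≤ N := by omega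
          exact_mod_cast Nat.lt_of_lt_of_le Nat.zero_lt_one h2
        rw [tcons_one hD]
        have hcast : ((N - 1 - Aval D p N : ℕ) : ℝ)
            = (N:ℝ) - 1 - ((Aval D p N : ℕ):ℝ) := by
          have hA2 : Aval D p N ≤ N - 1 := by omega
          have hDN : (1:ℕ) ≤ N := by omega
          push_cast [Nat.cast_sub hA2, Nat.cast_sub hDN]
          ring
        rw [hcast, sub_div, sub_div, div_self (ne_of_gt hNpos)]
      have hbase : Tendsto (fun N : ℕ => 1 - 1/(N:ℝ) - ((Aval D p N : ℕ):ℝ)/N) atTop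
          (nhds (1 - ∑ j ∈ hiSet D, ((j:ℕ):ℝ) * p j)) := by
        have h2 := ((tendsto_const_nhds (x := (1:ℝ)) (f := atTop (α := ℕ))).sub h1).sub hAtend
        simpa using h2
      rw [hp1]
      exact hbase.congr' hcongr
    · have hkk : k = 0 := by
        apply Fin.ext
        rw [Fin.val_zero]
        omega
      subst hkk
      have heq : ∀ N : ℕ, ((tcons D p N 0 : ℕ):ℝ)/N
          = 1/(N:ℝ) + ((Bval D p N : ℕ):ℝ)/N := by
        intro N
        rw [tcons_zero hD]
        push_cast
        rw [add_div]
      rw [funext heq, hp0]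
      have h2 := h1.add hBtend
      simpa using h2

end Stmt6Aux

open Stmt6Aux in
/-- the exponential growth rate of the partition function is minus
the minimal free energy: `lim (1/N) ln Z_N = −min_{p∈M} J(p)`. -/
theorem stmt6 (D : ℕ) (hD : 2 ≤ D) (β : ℝ) (hβ : 0 < β) (c : Fin (D+1) → ℝ)
    (pstar : Fin (D+1) → ℝ) (hpM : pstar ∈ Mset D)
    (hmin : ∀ q ∈ Mset D, Jfun D β c pstar ≤ Jfun D β c q) :
    Tendsto (fun N : ℕ => Real.log (Zpart D N β c) / N) atTop
      (nhds (-(Jfun D β c pstar))) := by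
  classical
  have hlog : Tendsto (fun N : ℕ => Real.log N / N) atTop (nhds 0) := by
    have h := (Real.tendsto_pow_log_div_mul_add_atTop 1 0 1 one_ne_zero).comp
      (tendsto_natCast_atTop_atTop (R := ℝ))
    simpa [Function.comp_def] using h
  have hinv : Tendsto (fun N : ℕ => 1/(N:ℝ)) atTop (nhds 0) :=
    tendsto_one_div_atTop_nhds_zero_nat
  have hlogs : Tendsto (fun N : ℕ => Real.log ((N:ℝ)+1) / N) atTop (nhds 0) := by
    have h2 : Tendsto (fun N : ℕ => Real.log ((N:ℝ)+1) / ((N:ℝ)+1)) atTop (nhds 0) := by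
      have h3 := hlog.comp (tendsto_add_atTop_nat 1)
      have heq : ∀ N : ℕ, (fun N : ℕ => Real.log N / N) ((fun a => a + 1) N)
          = Real.log ((N:ℝ)+1) / ((N:ℝ)+1) := by
        intro N
        simp only [Function.comp]
        push_cast
        rfl
      exact (funext heq) ▸ h3
    have h4 : Tendsto (fun N : ℕ => ((N:ℝ)+1)/N) atTop (nhds 1) := by
      have h5 : Tendsto (fun N : ℕ => 1 + 1/(N:ℝ)) atTop (nhds 1) := by
        have h6 := (tendsto_const_nhds (x := (1:ℝ)) (f := atTop (α := ℕ))).add hinv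
        simpa using h6
      refine h5.congr' ?_
      refine Filter.eventually_atTop.mpr ⟨1, fun N hN => ?_⟩
      have hN' : ((N:ℝ)) ≠ 0 := by
        have : (0:ℝ) < N := by exact_mod_cast hN
        exact ne_of_gt this
      field_simp
    have h6 := h2.mul h4
    rw [zero_mul] at h6
    refine h6.congr' ?_
    refine Filter.eventually_atTop.mpr ⟨1, fun N hN => ?_⟩
    have hN' : ((N:ℝ)) ≠ 0 := by
      have : (0:ℝ) < N := by exact_mod_cast hN
      exact ne_of_gt this
    have hN1' : ((N:ℝ)) + 1 ≠ 0 := by positivity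
    field_simp
  have hvec : Tendsto (fun N : ℕ => (fun k => ((tcons D pstar N k : ℕ):ℝ)/N)) atTop
      (nhds pstar) :=
    tendsto_pi_nhds.mpr (fun k => tcons_tendsto hD pstar hpM k)
  have hJt : Tendsto (fun N : ℕ => Jfun D β c (fun k => ((tcons D pstar N k : ℕ):ℝ)/N))
      atTop (nhds (Jfun D β c pstar)) :=
    ((contJ β c).tendsto pstar).comp hvec
  have herr : Tendsto (fun N : ℕ =>
      (((D:ℝ)+1) * Real.log (Real.exp 1 * N) + Real.log N)/N) atTop (nhds 0) := by
    have hbase : Tendsto (fun N : ℕ =>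
        ((D:ℝ)+1) * (1/(N:ℝ) + Real.log N/N) + Real.log N/N) atTop (nhds 0) := by
      have h2 := ((hinv.add hlog).const_mul ((D:ℝ)+1)).add hlog
      simpa using h2
    refine hbase.congr' ?_
    refine Filter.eventually_atTop.mpr ⟨1, fun N hN => ?_⟩
    have hN' : ((N:ℝ)) ≠ 0 := by
      have : (0:ℝ) < N := by exact_mod_cast hN
      exact ne_of_gt this
    beta_reduce
    rw [Real.log_mul (Real.exp_ne_zero 1) hN', Real.log_exp]
    field_simp
  have hLBt : Tendsto (fun N : ℕ =>
      -Jfun D β c (fun k => ((tcons D pstar N k : ℕ):ℝ)/N)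
        - (((D:ℝ)+1) * Real.log (Real.exp 1 * N) + Real.log N)/N) atTop
      (nhds (-(Jfun D β c pstar))) := by
    have h2 := hJt.neg.sub herr
    simpa using h2
  have hlower : ∀ᶠ N : ℕ in atTop,
      (-Jfun D β c (fun k => ((tcons D pstar N k : ℕ):ℝ)/N)
        - (((D:ℝ)+1) * Real.log (Real.exp 1 * N) + Real.log N)/N)
        ≤ Real.log (Zpart D N β c) / N ∧ 0 < Zpart D N β c := by
    refine Filter.eventually_atTop.mpr ⟨D + 1, fun N hN => ?_⟩
    have hN1 : 1 ≤ N := by omega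
    have hNR : (0:ℝ) < N := by exact_mod_cast hN1
    obtain ⟨hts, htd⟩ := tcons_spec hD pstar hpM hN
    have hZ := exp_le_Zpart hN1 β c (tcons D pstar N) hts htd
    have hCpos : (0:ℝ) < (Real.exp 1 * N)^(D+1) * N := by positivity
    have hZpos : 0 < Zpart D N β c := by
      rcases mul_pos_iff.mp (lt_of_lt_of_le (Real.exp_pos _) hZ) with h|h
      · exact h.2
      · exact absurd h.1 (not_lt.mpr hCpos.le)
    refine ⟨?_, hZpos⟩
    have hlogZ := Real.log_le_log (Real.exp_pos _) hZ
    rw [Real.log_exp, Real.log_mul (ne_of_gt (by positivity)) (ne_of_gt hZpos),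
      Real.log_mul (ne_of_gt (by positivity)) (ne_of_gt hNR), Real.log_pow] at hlogZ
    rw [le_div_iff₀ hNR]
    have hexp : (-Jfun D β c (fun k => ((tcons D pstar N k : ℕ):ℝ)/N)
        - (((D:ℝ)+1) * Real.log (Real.exp 1 * N) + Real.log N)/N) * N
        = -(N:ℝ) * Jfun D β c (fun k => ((tcons D pstar N k : ℕ):ℝ)/N)
          - (((D:ℝ)+1) * Real.log (Real.exp 1 * N) + Real.log N) := by
      field_simp
    rw [hexp]
    have hcast : (((D:ℕ)+1 : ℕ) : ℝ) = (D:ℝ)+1 := by push_cast; ring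
    rw [hcast] at hlogZ
    linarith
  rw [Metric.tendsto_atTop]
  intro ε hε
  obtain ⟨N1, hN11, hup⟩ := J_lower_eventually hD β c pstar hmin
    (show 0 < ε/4 by linarith)
  have h7 : Tendsto (fun N : ℕ => ((D:ℝ)+1) * (Real.log ((N:ℝ)+1)/N)) atTop (nhds 0) := by
    have h8 := hlogs.const_mul ((D:ℝ)+1)
    simpa using h8
  obtain ⟨N5, hN5⟩ := (Metric.tendsto_atTop.mp h7) (ε/4) (by linarith)
  obtain ⟨N6, hN6⟩ := (Metric.tendsto_atTop.mp hLBt) (ε/2) (by linarith)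
  obtain ⟨N7, hN7⟩ := Filter.eventually_atTop.mp hlower
  refine ⟨max (max N1 N5) (max N6 (max N7 1)), fun N hN => ?_⟩
  have hN1' : N1 ≤ N := le_trans (le_trans (le_max_left _ _) (le_max_left _ _)) hN
  have hN5' : N5 ≤ N := le_trans (le_trans (le_max_right _ _) (le_max_left _ _)) hN
  have hN6' : N6 ≤ N := le_trans (le_trans (le_max_left _ _) (le_max_right _ _)) hN
  have hN7' : N7 ≤ N := le_trans (le_trans (le_trans (le_max_left _ _) (le_max_right _ _))
    (le_max_right _ _)) hN
  have hNpos : 1 ≤ N := le_trans (le_trans (le_trans (le_max_right _ _) (le_max_right _ _))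
    (le_max_right _ _)) hN
  have hNR : (0:ℝ) < N := by exact_mod_cast hNpos
  obtain ⟨hLBle, hZpos⟩ := hN7 N hN7'
  -- upper bound on Z
  have hZle : Zpart D N β c
      ≤ ((N:ℝ)+1)^(D+1) * Real.exp (-(N:ℝ) * (Jfun D β c pstar - ε/4)) := by
    refine le_trans (Zpart_le_sum (by omega) β c) ?_
    have hsum := Finset.sum_le_card_nsmul ((Trees D N).image (chi D N))
      (fun t => Real.exp (-(N:ℝ) * Jfun D β c (fun k => ((t k : ℕ):ℝ)/N)))
      (Real.exp (-(N:ℝ) * (Jfun D β c pstar - ε/4)))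
      (fun t ht => by
        have h9 := hup N hN1' t ht
        refine Real.exp_le_exp.mpr ?_
        have h10 : -(N:ℝ) ≤ 0 := by linarith
        calc -(N:ℝ) * Jfun D β c (fun k => ((t k : ℕ):ℝ)/N)
            ≤ -(N:ℝ) * (Jfun D β c pstar - ε/4) :=
              mul_le_mul_of_nonpos_left (by linarith) h10)
    refine le_trans hsum ?_
    rw [nsmul_eq_mul]
    refine mul_le_mul_of_nonneg_right ?_ (le_of_lt (Real.exp_pos _))
    have hcard := card_types_le (D := D) (N := N)
    have h11 : (((Trees D N).image (chi D N)).card : ℝ) ≤ (((N+1)^(D+1) : ℕ) : ℝ) := by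
      exact_mod_cast hcard
    calc (((Trees D N).image (chi D N)).card : ℝ) ≤ (((N+1)^(D+1) : ℕ) : ℝ) := h11
      _ = ((N:ℝ)+1)^(D+1) := by push_cast; ring
  have hlogup : Real.log (Zpart D N β c) / N
      ≤ ((D:ℝ)+1) * (Real.log ((N:ℝ)+1)/N) - (Jfun D β c pstar - ε/4) := by
    have hlogZ := Real.log_le_log hZpos hZle
    rw [Real.log_mul (ne_of_gt (by positivity)) (Real.exp_ne_zero _), Real.log_pow,
      Real.log_exp] at hlogZ
    rw [div_le_iff₀ hNR]
    have hexp2 : (((D:ℝ)+1) * (Real.log ((N:ℝ)+1)/N) - (Jfun D β c pstar - ε/4)) * N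
        = ((D:ℝ)+1) * Real.log ((N:ℝ)+1) + (-(N:ℝ) * (Jfun D β c pstar - ε/4)) := by
      field_simp
      ring
    rw [hexp2]
    have hcast : (((D:ℕ)+1 : ℕ) : ℝ) = (D:ℝ)+1 := by push_cast; ring
    rw [hcast] at hlogZ
    linarith
  -- combine
  have hda := hN5 N hN5'
  rw [Real.dist_eq, sub_zero] at hda
  have hda2 : ((D:ℝ)+1) * (Real.log ((N:ℝ)+1)/N) < ε/4 := lt_of_abs_lt hda
  have hdb := hN6 N hN6'
  rw [Real.dist_eq] at hdb
  have hdb2 := abs_lt.mp hdb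
  rw [Real.dist_eq]
  rw [abs_lt]
  constructor
  · have h12 : -(Jfun D β c pstar) - ε/2 < Real.log (Zpart D N β c) / N := by
      calc -(Jfun D β c pstar) - ε/2
          < -Jfun D β c (fun k => ((tcons D pstar N k : ℕ):ℝ)/N)
            - (((D:ℝ)+1) * Real.log (Real.exp 1 * N) + Real.log N)/N := by
            linarith [hdb2.1]
        _ ≤ Real.log (Zpart D N β c) / N := hLBle
    linarith
  · have h13 : Real.log (Zpart D N β c) / N ≤ -(Jfun D β c pstar) + ε/2 := by
      calc Real.log (Zpart D N β c) / N
          ≤ ((D:ℝ)+1) * (Real.log ((N:ℝ)+1)/N) - (Jfun D β c pstar - ε/4) := hlogup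
        _ ≤ -(Jfun D β c pstar) + ε/2 := by linarith
    linarith
end

section
/- Let p ∈ M, and for each N let n(N) = (n_0(N), …, n_D(N)) be a vector of natural numbers with ∑_{k=0}^{D} n_k(N) = N, ∑_{k=0}^{D} k·n_k(N) = N − 1, and n_k(N)/N → p_k for each k as N → ∞. Then lim_{N→∞} (1/N) ln P_N{d ∈ 𝕋_N(D) : χ_k(d) = n_k(N) for all 0 ≤ k ≤ D} = −I(p). -/
open Finset Filter MeasureTheory

variable {D N : ℕ}

/-- number of sequences with given fiber counts -/
def OmegaSet (D N : ℕ) (v : Fin (D+1) → ℕ) : Finset (Fin N → Fin (D+1)) :=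
  Finset.univ.filter (fun d => ∀ k, (Finset.univ.filter (fun i => d i = k)).card = v k)

lemma card_filter_comp_equiv {α : Type*} [Fintype α] [DecidableEq α] (σ : α ≃ α)
    (P : α → Prop) [DecidablePred P] :
    (Finset.univ.filter fun i => P (σ i)).card = (Finset.univ.filter P).card := by
  rw [← Fintype.card_subtype, ← Fintype.card_subtype]
  exact Fintype.card_congr (σ.subtypeEquiv fun a => Iff.rfl)

lemma exists_seq_chi (v : Fin (D+1) → ℕ) (hv : ∑ k, v k = N) :
    ∃ d : Fin N → Fin (D+1), ∀ k, (Finset.univ.filter (fun i => d i = k)).card = v k := by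
  have hcard : Fintype.card (Σ k : Fin (D+1), Fin (v k)) = Fintype.card (Fin N) := by
    simp [Fintype.card_sigma, hv]
  obtain ⟨e⟩ : Nonempty ((Σ k : Fin (D+1), Fin (v k)) ≃ Fin N) :=
    ⟨Fintype.equivOfCardEq hcard⟩
  refine ⟨fun i => (e.symm i).1, fun k => ?_⟩
  rw [← Fintype.card_subtype]
  have e2 : {i : Fin N // (e.symm i).1 = k} ≃ {x : Σ k, Fin (v k) // x.1 = k} :=
    e.symm.subtypeEquiv (q := fun x : Σ k : Fin (D+1), Fin (v k) => x.1 = k) fun a => Iff.rfl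
  have e3 : {x : Σ k : Fin (D+1), Fin (v k) // x.1 = k} ≃ Fin (v k) :=
    { toFun := fun x => x.2 ▸ x.1.2
      invFun := fun y => ⟨⟨k, y⟩, rfl⟩
      left_inv := by rintro ⟨⟨j, y⟩, rfl⟩; rfl
      right_inv := fun y => rfl }
  rw [Fintype.card_congr (e2.trans e3), Fintype.card_fin]

lemma chi_mem_Omega {v : Fin (D+1) → ℕ} {d : Fin N → Fin (D+1)}
    (h : ∀ k, (Finset.univ.filter (fun i => d i = k)).card = v k) : d ∈ OmegaSet D N v := by
  simp [OmegaSet, h]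

lemma card_fiber_perm (d₀ d : Fin N → Fin (D+1)) (v : Fin (D+1) → ℕ)
    (h₀ : ∀ k, (Finset.univ.filter (fun i => d₀ i = k)).card = v k)
    (h : ∀ k, (Finset.univ.filter (fun i => d i = k)).card = v k) :
    (Finset.univ.filter (fun σ : Equiv.Perm (Fin N) => d₀ ∘ σ = d)).card = ∏ k, (v k).factorial := by
  classical
  have key : {σ : Equiv.Perm (Fin N) // ∀ i, d₀ (σ i) = d i} ≃
      (∀ k, {i // d i = k} ≃ {i // d₀ i = k}) := by
    refine
      { toFun := fun σ => fun k => σ.1.subtypeEquiv (q := fun j => d₀ j = k)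
          (fun i => by simp only [σ.2 i])
        invFun := fun F =>
          ⟨((Equiv.sigmaFiberEquiv d).symm.trans
              ((Equiv.sigmaCongrRight F).trans (Equiv.sigmaFiberEquiv d₀))), ?_⟩
        left_inv := ?_
        right_inv := ?_ }
    · intro i
      simp [Equiv.sigmaFiberEquiv, Equiv.sigmaCongrRight]
      exact (F (d i) ⟨i, rfl⟩).2
    · intro σ
      ext i
      simp [Equiv.sigmaFiberEquiv, Equiv.sigmaCongrRight, Equiv.subtypeEquiv]
    · intro F
      funext k
      ext x
      obtain ⟨x1, hx⟩ := x
      subst hx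
      simp [Equiv.sigmaFiberEquiv, Equiv.sigmaCongrRight, Equiv.subtypeEquiv]
  have hcard : ∀ k, Fintype.card {i // d i = k} = v k := by
    intro k; rw [Fintype.card_subtype]; exact h k
  have hcard₀ : ∀ k, Fintype.card {i // d₀ i = k} = v k := by
    intro k; rw [Fintype.card_subtype]; exact h₀ k
  have : (Finset.univ.filter (fun σ : Equiv.Perm (Fin N) => d₀ ∘ σ = d)).card
      = Fintype.card {σ : Equiv.Perm (Fin N) // ∀ i, d₀ (σ i) = d i} := by
    rw [Fintype.card_subtype]
    apply Finset.card_bij (fun σ _ => σ) <;> simp [funext_iff]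
  rw [this, Fintype.card_congr key, Fintype.card_pi]
  refine Finset.prod_congr rfl fun k _ => ?_
  have e : {i // d i = k} ≃ {i // d₀ i = k} :=
    Fintype.equivOfCardEq (by rw [hcard, hcard₀])
  rw [Fintype.card_equiv e, hcard]

lemma card_Omega_mul_factorial (v : Fin (D+1) → ℕ) (hv : ∑ k, v k = N) :
    (OmegaSet D N v).card * ∏ k, (v k).factorial = N.factorial := by
  classical
  obtain ⟨d₀, h₀⟩ := exists_seq_chi v hv
  have hmaps : ∀ σ ∈ (Finset.univ : Finset (Equiv.Perm (Fin N))),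
      d₀ ∘ σ ∈ OmegaSet D N v := by
    intro σ _
    apply chi_mem_Omega
    intro k
    rw [← h₀ k]
    exact card_filter_comp_equiv σ (fun i => d₀ i = k)
  have := Finset.card_eq_sum_card_fiberwise hmaps
  rw [Finset.card_univ, Fintype.card_perm, Fintype.card_fin] at this
  rw [this] at *
  rw [Finset.sum_congr rfl (fun d hd => ?_), Finset.sum_const, smul_eq_mul]
  have hd' : ∀ k, (Finset.univ.filter (fun i => d i = k)).card = v k := by
    have := (Finset.mem_filter.mp hd).2
    simpa [OmegaSet] using hd
  exact card_fiber_perm d₀ d v h₀ hd'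



lemma sum_filter_lt_eq {N m : ℕ} (hN : 0 < N) (hm : m ≤ N) (f : ℕ → ℕ) :
    ∑ i ∈ Finset.univ.filter (fun i : Fin N => (i : ℕ) < m), f (i : ℕ)
      = ∑ t ∈ Finset.range m, f t := by
  refine Finset.sum_nbij' (fun i => (i : ℕ)) (fun t => ⟨t % N, Nat.mod_lt _ hN⟩) ?_ ?_ ?_ ?_ ?_
  · intro a ha
    simp only [Finset.mem_filter] at ha
    exact Finset.mem_range.mpr ha.2
  · intro t ht
    simp only [Finset.mem_range] at ht
    have : t % N = t := Nat.mod_eq_of_lt (lt_of_lt_of_le ht hm)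
    simp [this, ht]
  · intro a ha
    simp only [Finset.mem_filter] at ha
    have : (a : ℕ) % N = (a : ℕ) := Nat.mod_eq_of_lt a.isLt
    exact Fin.ext (by simp [this])
  · intro t ht
    simp only [Finset.mem_range] at ht
    simp [Nat.mod_eq_of_lt (lt_of_lt_of_le ht hm)]
  · intro a ha; rfl

lemma exists_first_argmin (S : ℕ → ℤ) (N : ℕ) :
    ∃ r, r ≤ N ∧ (∀ j ≤ N, S r ≤ S j) ∧ ∀ j, j < r → S r < S j := by
  classical
  have hex : ∃ r, r ≤ N ∧ ∀ j ≤ N, S r ≤ S j := by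
    obtain ⟨r, hr, hrm⟩ := Finset.exists_min_image (Finset.range (N+1)) S ⟨0, by simp⟩
    exact ⟨r, by simpa using Nat.lt_succ_iff.mp (Finset.mem_range.mp hr),
      fun j hj => hrm j (Finset.mem_range.mpr (Nat.lt_succ_of_le hj))⟩
  obtain ⟨hrN, hrmin⟩ := Nat.find_spec hex
  refine ⟨Nat.find hex, hrN, hrmin, fun j hj => ?_⟩
  have := Nat.find_min hex hj
  push_neg at this
  obtain ⟨j', hj', hlt⟩ := this (le_trans (le_of_lt hj) hrN)
  exact lt_of_le_of_lt (hrmin j' hj') hlt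

open Fin.NatCast in
lemma exists_rot_tree {D N : ℕ} (hN : 1 ≤ N) (d : Fin N → Fin (D+1))
    (hsum : ∑ i, (d i : ℕ) = N - 1) :
    ∃ c : Fin N, IsTreeSeq D N (fun i => d (i + c)) := by
  haveI : NeZero N := ⟨by omega⟩
  set g : ℕ → ℕ := fun t => (d ((t : ℕ) : Fin N) : ℕ) with hg
  set A : ℕ → ℕ := fun m => ∑ i ∈ Finset.range m, g i with hA
  have hgp : ∀ t, g (t + N) = g t := by
    intro t
    simp only [hg]
    congr 1
    push_cast
    simp
  have hAN : A N = N - 1 := by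
    rw [hA, ← hsum]
    simp only []
    rw [← Fin.sum_univ_eq_sum_range (fun i => g i) N]
    refine Finset.sum_congr rfl fun i _ => ?_
    simp [hg, Fin.cast_val_eq_self]
  have hAadd : ∀ s t, A (s + t) = A s + ∑ i ∈ Finset.range t, g (s + i) := by
    intro s t
    rw [hA]
    simp only []
    rw [← Finset.sum_range_add_sum_Ico _ (Nat.le_add_right s t)]
    congr 1
    rw [Finset.sum_Ico_eq_sum_range]
    simp
  have hAper : ∀ t, A (N + t) = (N - 1) + A t := by
    intro t
    rw [hAadd N t, hAN]
    congr 1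
    refine Finset.sum_congr rfl fun i _ => ?_
    rw [Nat.add_comm N i, hgp]
  obtain ⟨r, hrN, hrmin, hstrict⟩ := exists_first_argmin (fun m => (A m : ℤ) - m) N
  --
  refine ⟨(r : Fin N), ?_, ?_⟩
  · rw [← hsum]
    exact Fintype.sum_equiv (Equiv.addRight ((r : ℕ) : Fin N)) _ _ (fun i => rfl)
  · intro m hm1 hmN
    have hrot : ∀ i : Fin N, ((d (i + ((r:ℕ) : Fin N)) : ℕ)) = g ((i : ℕ) + r) := by
      intro i
      have : (i + ((r:ℕ) : Fin N)) = (((i:ℕ) + r : ℕ) : Fin N) := by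
        apply Fin.ext
        rw [Fin.add_def]
        simp only [Fin.val_natCast]
        conv_rhs => rw [Nat.add_mod]
        rw [Nat.mod_eq_of_lt i.isLt]
      rw [this]
      --
    calc m ≤ ∑ t ∈ Finset.range m, g (t + r) := ?_
      _ = ∑ i ∈ Finset.univ.filter (fun i : Fin N => (i : ℕ) < m),
            (d (i + ((r:ℕ) : Fin N)) : ℕ) := by
          rw [show (∑ i ∈ Finset.univ.filter (fun i : Fin N => (i : ℕ) < m),
            ((d (i + ((r:ℕ) : Fin N)) : ℕ))) = ∑ i ∈ Finset.univ.filter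
              (fun i : Fin N => (i : ℕ) < m), g ((i:ℕ) + r) from
            Finset.sum_congr rfl fun i _ => hrot i]
          rw [sum_filter_lt_eq (by omega) (le_of_lt hmN) (fun t => g (t + r))]
    have hsplit : A (r + m) = A r + ∑ t ∈ Finset.range m, g (t + r) := by
      rw [hAadd r m]
      congr 1
      exact Finset.sum_congr rfl fun i _ => by rw [Nat.add_comm r i]
    by_cases hcase : r + m ≤ N
    · have h1 := hrmin (r + m) hcase
      omega
    · push_neg at hcase
      have hjr : r + m - N < r := by omega
      have hAj : A (r + m) = (N - 1) + A (r + m - N) := by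
        have h0 : A (r + m) = A (N + (r + m - N)) := by congr 1; omega
        rw [h0, hAper (r + m - N)]
      have h1 := hstrict (r + m - N) hjr
      omega











open scoped Classical in
noncomputable def TnSet (D N : ℕ) (v : Fin (D+1) → ℕ) : Finset (Fin N → Fin (D+1)) :=
  (Trees D N).filter (fun d => ∀ k, chi D N d k = v k)

lemma chi_rot {D N : ℕ} [NeZero N] (d : Fin N → Fin (D+1)) (c : Fin N) (k : Fin (D+1)) :
    chi D N (fun i => d (i + c)) k = chi D N d k :=
  card_filter_comp_equiv (Equiv.addRight c) (fun j => d j = k)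

lemma chi_sum {D N : ℕ} (d : Fin N → Fin (D+1)) : ∑ k, chi D N d k = N := by
  have := Finset.card_eq_sum_card_fiberwise
    (fun (i : Fin N) (_ : i ∈ Finset.univ) => Finset.mem_univ (d i))
  simpa [chi, Finset.card_univ] using this.symm

lemma sum_comp_chi {D N : ℕ} {M : Type*} [AddCommMonoid M] (d : Fin N → Fin (D+1))
    (f : Fin (D+1) → M) : ∑ i, f (d i) = ∑ k, (chi D N d k) • f k := by
  classical
  rw [← Finset.sum_fiberwise_of_maps_to
    (fun (i : Fin N) (_ : i ∈ Finset.univ) => Finset.mem_univ (d i)) (fun i => f (d i))]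
  refine Finset.sum_congr rfl fun k _ => ?_
  rw [Finset.sum_congr rfl (fun i hi => ?_), Finset.sum_const]
  · rfl
  · rw [(Finset.mem_filter.mp hi).2]

lemma sum_val_of_mem_Omega {D N : ℕ} {v : Fin (D+1) → ℕ} {d : Fin N → Fin (D+1)}
    (hd : d ∈ OmegaSet D N v) : ∑ i, (d i : ℕ) = ∑ k : Fin (D+1), (k : ℕ) * v k := by
  have hchi : ∀ k, chi D N d k = v k := by
    have := (Finset.mem_filter.mp hd).2
    exact this
  rw [sum_comp_chi d (fun k => (k : ℕ))]
  refine Finset.sum_congr rfl fun k _ => ?_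
  rw [hchi k, smul_eq_mul, mul_comm]

lemma TnSet_nonempty {D N : ℕ} (hN : 1 ≤ N) (v : Fin (D+1) → ℕ)
    (hv1 : ∑ k, v k = N) (hv2 : ∑ k : Fin (D+1), (k : ℕ) * v k = N - 1)
    (hne : (OmegaSet D N v).Nonempty) : (TnSet D N v).Nonempty := by
  classical
  haveI : NeZero N := ⟨by omega⟩
  obtain ⟨d, hd⟩ := hne
  have hsum : ∑ i, (d i : ℕ) = N - 1 := by rw [sum_val_of_mem_Omega hd, hv2]
  obtain ⟨c, hc⟩ := exists_rot_tree hN d hsum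
  refine ⟨fun i => d (i + c), Finset.mem_filter.mpr ⟨Finset.mem_filter.mpr ⟨Finset.mem_univ _, hc⟩, ?_⟩⟩
  intro k
  rw [chi_rot d c k]
  exact (Finset.mem_filter.mp hd).2 k

lemma TnSet_subset_Omega {D N : ℕ} (v : Fin (D+1) → ℕ) :
    TnSet D N v ⊆ OmegaSet D N v := by
  intro d hd
  exact Finset.mem_filter.mpr ⟨Finset.mem_univ _, (Finset.mem_filter.mp hd).2⟩

lemma card_Omega_le_mul {D N : ℕ} (hN : 1 ≤ N) (v : Fin (D+1) → ℕ)
    (hv2 : ∑ k : Fin (D+1), (k : ℕ) * v k = N - 1) :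
    (OmegaSet D N v).card ≤ N * (TnSet D N v).card := by
  classical
  haveI : NeZero N := ⟨by omega⟩
  set Φ : (Fin N → Fin (D+1)) → (Fin N → Fin (D+1)) := fun d =>
    if h : ∑ i, (d i : ℕ) = N - 1 then
      (fun i => d (i + Classical.choose (exists_rot_tree hN d h))) else d with hΦ
  have hΦd : ∀ d ∈ OmegaSet D N v, ∃ c : Fin N,
      Φ d = (fun i => d (i + c)) ∧ IsTreeSeq D N (Φ d) := by
    intro d hd
    have hs : ∑ i, (d i : ℕ) = N - 1 := by rw [sum_val_of_mem_Omega hd, hv2]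
    refine ⟨Classical.choose (exists_rot_tree hN d hs), ?_, ?_⟩
    · rw [hΦ]; simp only [dif_pos hs]
    · rw [hΦ]; simp only [dif_pos hs]
      exact Classical.choose_spec (exists_rot_tree hN d hs)
  have himg : (OmegaSet D N v).image Φ ⊆ TnSet D N v := by
    intro t ht
    obtain ⟨d, hd, rfl⟩ := Finset.mem_image.mp ht
    obtain ⟨c, hc, htree⟩ := hΦd d hd
    refine Finset.mem_filter.mpr ⟨Finset.mem_filter.mpr ⟨Finset.mem_univ _, htree⟩, ?_⟩
    intro k
    rw [hc, chi_rot d c k]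
    exact (Finset.mem_filter.mp hd).2 k
  calc (OmegaSet D N v).card ≤ N * ((OmegaSet D N v).image Φ).card := by
        apply Finset.card_le_mul_card_image
        intro t ht
        calc ((OmegaSet D N v).filter (fun d => Φ d = t)).card
            ≤ ((Finset.univ : Finset (Fin N)).image (fun c => fun i => t (i + c))).card := by
              apply Finset.card_le_card
              intro d hd
              obtain ⟨hdO, hdt⟩ := Finset.mem_filter.mp hd
              obtain ⟨c, hc, _⟩ := hΦd d hdO
              rw [hc] at hdt
              refine Finset.mem_image.mpr ⟨-c, Finset.mem_univ _, ?_⟩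
              funext j
              have : t (j + -c) = d (j + -c + c) := by rw [← hdt]
              rw [this]
              congr 1
              simp
          _ ≤ N := by
              calc _ ≤ (Finset.univ : Finset (Fin N)).card := Finset.card_image_le
                _ = N := by simp
    _ ≤ N * (TnSet D N v).card :=
        Nat.mul_le_mul_left N (Finset.card_le_card himg)







lemma log_factorial_ge (m : ℕ) : (m:ℝ) * Real.log m - m ≤ Real.log (m.factorial) := by
  have h1 : ((m:ℝ))^m / m.factorial ≤ Real.exp m := by
    calc ((m:ℝ))^m / m.factorial ≤ ∑ i ∈ Finset.range (m+1), (m:ℝ)^i / i.factorial := by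
          refine Finset.single_le_sum (f := fun i => (m:ℝ)^i / (i.factorial : ℝ)) ?_ ?_
          · intro i _; positivity
          · simp
      _ ≤ Real.exp m := Real.sum_le_exp_of_nonneg (by positivity) _
  have h2 : ((m:ℝ))^m ≤ m.factorial * Real.exp m := by
    rw [div_le_iff₀ (by positivity)] at h1
    linarith
  have hp : (0:ℝ) < (m:ℝ)^m := by
    rcases Nat.eq_zero_or_pos m with h | h
    · simp [h]
    · have : (0:ℝ) < m := by exact_mod_cast h
      positivity
  have h3 := Real.log_le_log hp h2
  rw [Real.log_pow, Real.log_mul (by positivity) (Real.exp_ne_zero _), Real.log_exp] at h3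
  linarith

lemma exp_mul_pow_le_succ (m : ℕ) (hm : 1 ≤ m) :
    Real.exp 1 * (m:ℝ)^(m+1) ≤ ((m:ℝ)+1)^(m+1) := by
  have hm0 : (0:ℝ) < m := by exact_mod_cast hm
  have hlog : (1:ℝ) ≤ ((m:ℝ)+1) * Real.log (((m:ℝ)+1)/m) := by
    have h1 : Real.log ((m:ℝ)/((m:ℝ)+1)) ≤ (m:ℝ)/((m:ℝ)+1) - 1 :=
      Real.log_le_sub_one_of_pos (by positivity)
    have h2 : Real.log ((m:ℝ)/((m:ℝ)+1)) = -Real.log (((m:ℝ)+1)/m) := by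
      rw [← Real.log_inv]
      congr 1
      field_simp
    have h3 : (m:ℝ)/((m:ℝ)+1) - 1 = -(1/((m:ℝ)+1)) := by field_simp; ring
    rw [h2, h3] at h1
    have h4 : 1/((m:ℝ)+1) ≤ Real.log (((m:ℝ)+1)/m) := by linarith
    calc (1:ℝ) = ((m:ℝ)+1) * (1/((m:ℝ)+1)) := by field_simp
      _ ≤ ((m:ℝ)+1) * Real.log (((m:ℝ)+1)/m) := by
          exact mul_le_mul_of_nonneg_left h4 (by positivity)
  have h5 : Real.exp 1 ≤ (((m:ℝ)+1)/m)^(m+1) := by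
    calc Real.exp 1 ≤ Real.exp (((m:ℝ)+1) * Real.log (((m:ℝ)+1)/m)) := Real.exp_le_exp.mpr hlog
      _ = (((m:ℝ)+1)/m)^(m+1) := by
          rw [show ((m:ℝ)+1) = ((m+1 : ℕ) : ℝ) by push_cast; ring]
          rw [Real.exp_nat_mul, Real.exp_log (by positivity)]
  calc Real.exp 1 * (m:ℝ)^(m+1) ≤ (((m:ℝ)+1)/m)^(m+1) * (m:ℝ)^(m+1) := by
        exact mul_le_mul_of_nonneg_right h5 (by positivity)
    _ = ((m:ℝ)+1)^(m+1) := by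
        rw [div_pow, div_mul_cancel₀]
        positivity

lemma factorial_mul_exp_le (m : ℕ) (hm : 1 ≤ m) :
    (m.factorial : ℝ) * Real.exp m ≤ Real.exp 1 * m * (m:ℝ)^m := by
  induction m, hm using Nat.le_induction with
  | base => simp
  | succ m hm ih =>
    have hstep := exp_mul_pow_le_succ m hm
    have hexp : Real.exp ((m:ℝ)+1) = Real.exp m * Real.exp 1 := by
      rw [← Real.exp_add]
    have : ((m+1).factorial : ℝ) = ((m:ℝ)+1) * m.factorial := by
      rw [Nat.factorial_succ]; push_cast; ring
    push_cast
    rw [this, hexp]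
    calc ((m:ℝ)+1) * m.factorial * (Real.exp m * Real.exp 1)
        = (((m).factorial : ℝ) * Real.exp m) * (((m:ℝ)+1) * Real.exp 1) := by ring
      _ ≤ (Real.exp 1 * m * (m:ℝ)^m) * (((m:ℝ)+1) * Real.exp 1) := by
          apply mul_le_mul_of_nonneg_right ih (by positivity)
      _ = (Real.exp 1 * (m:ℝ)^(m+1)) * (((m:ℝ)+1) * Real.exp 1) := by ring
      _ ≤ (((m:ℝ)+1)^(m+1)) * (((m:ℝ)+1) * Real.exp 1) := by
          apply mul_le_mul_of_nonneg_right hstep (by positivity)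
      _ = Real.exp 1 * ((m:ℝ)+1) * ((m:ℝ)+1)^(m+1) := by ring
  
lemma log_factorial_le (m : ℕ) (hm : 1 ≤ m) :
    Real.log (m.factorial) ≤ (m:ℝ) * Real.log m - m + (1 + Real.log m) := by
  have hm0 : (0:ℝ) < m := by exact_mod_cast hm
  have h := factorial_mul_exp_le m hm
  have h2 := Real.log_le_log (by positivity) h
  rw [Real.log_mul (by positivity) (Real.exp_ne_zero _), Real.log_exp,
    Real.log_mul (by positivity) (by positivity),
    Real.log_mul (Real.exp_ne_zero _) (by positivity), Real.log_exp, Real.log_pow] at h2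
  linarith

lemma abs_log_factorial_sub (m N : ℕ) (h : m ≤ N) (hN : 1 ≤ N) :
    |Real.log (m.factorial) - ((m:ℝ) * Real.log m - m)| ≤ 1 + Real.log N := by
  have hlogN : 0 ≤ Real.log N := Real.log_nonneg (by exact_mod_cast hN)
  rcases Nat.eq_zero_or_pos m with hm | hm
  · subst hm; simpa using by linarith
  · have hlow := log_factorial_ge m
    have hup := log_factorial_le m hm
    have hmN : Real.log m ≤ Real.log N := by
      apply Real.log_le_log (by exact_mod_cast hm) (by exact_mod_cast h)
    rw [abs_le]
    constructor <;> linarith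

lemma Nmul_entropy {D : ℕ} (N : ℕ) (hN : 1 ≤ N) (v : Fin (D+1) → ℕ) (hv : ∑ k, v k = N) :
    (N:ℝ) * entropyFn D (fun k => (v k : ℝ) / N) =
      (N:ℝ) * Real.log N - ∑ k, (v k : ℝ) * Real.log (v k) := by
  have hN0 : (0:ℝ) < N := by exact_mod_cast hN
  rw [entropyFn]
  rw [show -(∑ k : Fin (D+1), (v k : ℝ)/N * Real.log ((v k : ℝ)/N))
    = -∑ k : Fin (D+1), ((v k : ℝ)/N * Real.log ((v k : ℝ)/N)) from rfl]
  rw [mul_neg, Finset.mul_sum]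
  have hterm : ∀ k : Fin (D+1), (N:ℝ) * ((v k : ℝ)/N * Real.log ((v k : ℝ)/N))
      = (v k : ℝ) * Real.log (v k) - (v k : ℝ) * Real.log N := by
    intro k
    rcases Nat.eq_zero_or_pos (v k) with h0 | h0
    · simp [h0]
    · have hv0 : (0:ℝ) < v k := by exact_mod_cast h0
      rw [Real.log_div (by positivity) (by positivity)]
      field_simp
  rw [Finset.sum_congr rfl (fun k _ => hterm k), Finset.sum_sub_distrib, ← Finset.sum_mul]
  have : (∑ k : Fin (D+1), (v k:ℝ)) = (N:ℝ) := by
    exact_mod_cast hv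
  rw [this]
  ring

lemma Nmul_energy {D : ℕ} (N : ℕ) (hN : 1 ≤ N) (c : Fin (D+1) → ℝ) (v : Fin (D+1) → ℕ) :
    (N:ℝ) * energyFn D c (fun k => (v k : ℝ) / N) = ∑ k, (v k : ℝ) * c k := by
  have hN0 : (0:ℝ) < N := by exact_mod_cast hN
  rw [energyFn, Finset.mul_sum]
  refine Finset.sum_congr rfl fun k _ => ?_
  field_simp


lemma Omega_nonempty {D N : ℕ} (v : Fin (D+1) → ℕ) (hv : ∑ k, v k = N) :
    (OmegaSet D N v).Nonempty := by
  obtain ⟨d, hd⟩ := exists_seq_chi v hv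
  exact ⟨d, chi_mem_Omega hd⟩

lemma v_le_N {D N : ℕ} {v : Fin (D+1) → ℕ} (hv : ∑ k, v k = N) (k : Fin (D+1)) : v k ≤ N := by
  rw [← hv]
  exact Finset.single_le_sum (fun i _ => Nat.zero_le _) (Finset.mem_univ k)

lemma abs_log_card_Omega {D N : ℕ} (hN : 1 ≤ N) (v : Fin (D+1) → ℕ) (hv : ∑ k, v k = N) :
    |Real.log ((OmegaSet D N v).card) - (N:ℝ) * entropyFn D (fun k => (v k:ℝ) / N)|
      ≤ ((D:ℝ)+2) * (1 + Real.log N) := by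
  have hcard := card_Omega_mul_factorial v hv
  have hpos : 0 < (OmegaSet D N v).card := Finset.card_pos.mpr (Omega_nonempty v hv)
  have hcast : ((OmegaSet D N v).card : ℝ) * ∏ k, ((v k).factorial : ℝ) = (N.factorial : ℝ) := by
    exact_mod_cast congrArg (fun t : ℕ => (t : ℝ)) hcard
  have hlog : Real.log ((OmegaSet D N v).card)
      = Real.log (N.factorial) - ∑ k, Real.log ((v k).factorial) := by
    have h1 : Real.log (((OmegaSet D N v).card : ℝ) * ∏ k, ((v k).factorial : ℝ))
        = Real.log (N.factorial) := by rw [hcast]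
    rw [Real.log_mul (by positivity) (by positivity), Real.log_prod] at h1
    · linarith
    · intro k _
      positivity
  have hent := Nmul_entropy N hN v hv
  have hsumv : (∑ k : Fin (D+1), (v k : ℝ)) = (N:ℝ) := by exact_mod_cast hv
  have hmain : Real.log ((OmegaSet D N v).card) - (N:ℝ) * entropyFn D (fun k => (v k:ℝ) / N)
      = (Real.log (N.factorial) - ((N:ℝ) * Real.log N - N))
        - ∑ k, (Real.log ((v k).factorial) - ((v k : ℝ) * Real.log (v k) - v k)) := by
    rw [hlog, hent, Finset.sum_sub_distrib, Finset.sum_sub_distrib, hsumv]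
    ring
  rw [hmain]
  have hb0 := abs_log_factorial_sub N N le_rfl hN
  have hbk : ∀ k : Fin (D+1),
      |Real.log ((v k).factorial) - ((v k : ℝ) * Real.log (v k) - v k)| ≤ 1 + Real.log N :=
    fun k => abs_log_factorial_sub (v k) N (v_le_N hv k) hN
  calc |_ - _| ≤ |Real.log (N.factorial) - ((N:ℝ) * Real.log N - N)|
        + |∑ k, (Real.log ((v k).factorial) - ((v k : ℝ) * Real.log (v k) - v k))| :=
      abs_sub _ _
    _ ≤ (1 + Real.log N) + ∑ k : Fin (D+1), (1 + Real.log N) := by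
        gcongr
        calc |∑ k, (Real.log ((v k).factorial) - ((v k : ℝ) * Real.log (v k) - v k))|
            ≤ ∑ k, |Real.log ((v k).factorial) - ((v k : ℝ) * Real.log (v k) - v k)| :=
            Finset.abs_sum_le_sum_abs _ _
          _ ≤ ∑ k : Fin (D+1), (1 + Real.log N) := Finset.sum_le_sum (fun k _ => hbk k)
    _ = ((D:ℝ)+2) * (1 + Real.log N) := by
        rw [Finset.sum_const, Finset.card_univ, Fintype.card_fin]
        push_cast
        ring

lemma abs_log_card_Tn {D N : ℕ} (hN : 1 ≤ N) (v : Fin (D+1) → ℕ)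
    (hv1 : ∑ k, v k = N) (hv2 : ∑ k : Fin (D+1), (k:ℕ) * v k = N - 1) :
    |Real.log ((TnSet D N v).card) - (N:ℝ) * entropyFn D (fun k => (v k:ℝ) / N)|
      ≤ ((D:ℝ)+3) * (1 + Real.log N) := by
  have hsub : (TnSet D N v).card ≤ (OmegaSet D N v).card :=
    Finset.card_le_card (TnSet_subset_Omega v)
  have hmul := card_Omega_le_mul hN v hv2
  have hTpos : 0 < (TnSet D N v).card :=
    Finset.card_pos.mpr (TnSet_nonempty hN v hv1 hv2 (Omega_nonempty v hv1))
  have hT1 : Real.log ((TnSet D N v).card) ≤ Real.log ((OmegaSet D N v).card) :=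
    Real.log_le_log (by exact_mod_cast hTpos) (by exact_mod_cast hsub)
  have hT2 : Real.log ((OmegaSet D N v).card) ≤ Real.log N + Real.log ((TnSet D N v).card) := by
    have h1 : Real.log ((OmegaSet D N v).card) ≤ Real.log ((N : ℝ) * (TnSet D N v).card) := by
      apply Real.log_le_log
      · exact_mod_cast Finset.card_pos.mpr (Omega_nonempty v hv1)
      · exact_mod_cast hmul
    rwa [Real.log_mul (by positivity) (by exact_mod_cast hTpos.ne')] at h1
  have hO := abs_log_card_Omega hN v hv1
  have hlogN : 0 ≤ Real.log N := Real.log_nonneg (by exact_mod_cast hN)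
  rw [abs_le] at hO ⊢
  constructor
  · nlinarith [hO.1]
  · nlinarith [hO.2]


lemma phi_nonneg {x : ℝ} (h0 : 0 ≤ x) (h1 : x ≤ 1) : 0 ≤ -(x * Real.log x) := by
  have := Real.log_nonpos h0 h1
  nlinarith

lemma phi_diff {a δ : ℝ} (ha : 0 ≤ a) (hδ : 0 ≤ δ) (h1 : a + δ ≤ 1) :
    |(-((a+δ) * Real.log (a+δ))) - (-(a * Real.log a))| ≤ -(δ * Real.log δ) + δ := by
  have hδ1 : δ ≤ 1 := by linarith
  have hφδ : 0 ≤ -(δ * Real.log δ) := phi_nonneg hδ hδ1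
  have hup : -((a+δ) * Real.log (a+δ)) - (-(a * Real.log a)) ≤ -(δ * Real.log δ) := by
    rcases eq_or_lt_of_le ha with rfl | ha0
    · simp
    rcases eq_or_lt_of_le hδ with rfl | hδ0
    · simp
    have hlaa : Real.log a ≤ Real.log (a + δ) := Real.log_le_log ha0 (by linarith)
    have hlδ : Real.log δ ≤ Real.log (a + δ) := Real.log_le_log hδ0 (by linarith)
    nlinarith [mul_le_mul_of_nonneg_left hlaa (le_of_lt ha0),
      mul_le_mul_of_nonneg_left hlδ (le_of_lt hδ0)]
  have hlo : -(a * Real.log a) - (-((a+δ) * Real.log (a+δ))) ≤ δ := by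
    rcases eq_or_lt_of_le ha with rfl | ha0
    · rcases eq_or_lt_of_le hδ with rfl | hδ0
      · simp
      · have hlog : Real.log δ ≤ 1 := le_trans (Real.log_nonpos hδ hδ1) zero_le_one
        have : δ * Real.log δ ≤ δ * 1 := mul_le_mul_of_nonneg_left hlog hδ
        simp only [zero_add]
        nlinarith
    · have haδ : 0 < a + δ := by linarith
      have hlognp : Real.log (a + δ) ≤ 0 := Real.log_nonpos (le_of_lt haδ) h1
      have hdiv : Real.log ((a+δ)/a) ≤ (a+δ)/a - 1 := Real.log_le_sub_one_of_pos (by positivity)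
      have hlogdiv : Real.log ((a+δ)/a) = Real.log (a+δ) - Real.log a :=
        Real.log_div (ne_of_gt haδ) (ne_of_gt ha0)
      have h3 : (a+δ)/a - 1 = δ/a := by field_simp; ring
      rw [hlogdiv, h3] at hdiv
      have h4 : a * (Real.log (a+δ) - Real.log a) ≤ a * (δ/a) :=
        mul_le_mul_of_nonneg_left hdiv (le_of_lt ha0)
      have h5 : a * (δ/a) = δ := by field_simp
      nlinarith [mul_le_mul_of_nonneg_left hlognp hδ]
  rw [abs_le]
  constructor <;> linarith

lemma fin_zero_ne_one {D : ℕ} (hD : 2 ≤ D) : (0 : Fin (D+1)) ≠ 1 := by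
  intro hcontra
  have := congrArg Fin.val hcontra
  rw [Fin.val_zero, Fin.val_one'] at this
  rw [Nat.mod_eq_of_lt (by omega)] at this
  exact absurd this (by omega)

lemma sum_sub_pair {D : ℕ} (hD : 2 ≤ D) (f g : Fin (D+1) → ℝ)
    (h : ∀ k : Fin (D+1), k ≠ 0 → k ≠ 1 → f k = g k) :
    ∑ k, f k - ∑ k, g k = (f 0 - g 0) + (f 1 - g 1) := by
  have h01 := fin_zero_ne_one hD
  rw [← Finset.sum_sub_distrib]
  rw [← Finset.sum_subset (Finset.subset_univ ({0,1} : Finset (Fin (D+1))))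
    (fun x _ hx => ?_)]
  · rw [Finset.sum_pair h01]
  · simp only [Finset.mem_insert, Finset.mem_singleton] at hx
    push_neg at hx
    rw [h x hx.1 hx.2]
    ring

lemma v0_pos {D N : ℕ} (hN : 1 ≤ N) (v : Fin (D+1) → ℕ)
    (hv1 : ∑ k, v k = N) (hv2 : ∑ k : Fin (D+1), (k:ℕ) * v k = N - 1) : 1 ≤ v 0 := by
  haveI : NeZero (D+1) := ⟨by omega⟩
  have hsplit : v 0 + ∑ k ∈ (Finset.univ : Finset (Fin (D+1))).erase 0, v k = N := by
    rw [Finset.add_sum_erase _ _ (Finset.mem_univ 0)]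
    exact hv1
  have hle : ∑ k ∈ (Finset.univ : Finset (Fin (D+1))).erase 0, v k ≤ ∑ k ∈ (Finset.univ : Finset (Fin (D+1))).erase 0, (k:ℕ) * v k := by
    refine Finset.sum_le_sum fun k hk => ?_
    have hk0 : k ≠ 0 := (Finset.mem_erase.mp hk).1
    have : 1 ≤ (k : ℕ) := by
      rcases Nat.eq_zero_or_pos (k : ℕ) with h | h
      · exact absurd (Fin.ext (by simp [h]) : k = 0) hk0
      · exact h
    exact Nat.le_mul_of_pos_left _ (by omega)
  have hle2 : ∑ k ∈ (Finset.univ : Finset (Fin (D+1))).erase 0, (k:ℕ) * v k ≤ N - 1 := by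
    rw [← hv2]
    exact Finset.sum_le_sum_of_subset (Finset.erase_subset _ _)
  omega

lemma v1_le {D N : ℕ} (hN : 1 ≤ N) (v : Fin (D+1) → ℕ) (hD : 2 ≤ D)
    (hv2 : ∑ k : Fin (D+1), (k:ℕ) * v k = N - 1) : v 1 + 1 ≤ N := by
  have h1 : ((1 : Fin (D+1)) : ℕ) * v 1 ≤ N - 1 := by
    rw [← hv2]
    exact Finset.single_le_sum (f := fun k : Fin (D+1) => (k:ℕ) * v k) (fun i _ => Nat.zero_le _) (Finset.mem_univ (1 : Fin (D+1)))
  have hval : ((1 : Fin (D+1)) : ℕ) = 1 := by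
    rw [Fin.val_one', Nat.mod_eq_of_lt (by omega)]
  rw [hval, one_mul] at h1
  omega

lemma Jfun_shift {D N : ℕ} (hD : 2 ≤ D) (hN : 1 ≤ N) (β : ℝ) (hβ : 0 < β) (c : Fin (D+1) → ℝ)
    (v : Fin (D+1) → ℕ) (hv1 : ∑ k, v k = N) (hv2 : ∑ k : Fin (D+1), (k:ℕ) * v k = N - 1) :
    ∃ q ∈ Mset D, Jfun D β c q ≤ Jfun D β c (fun k => (v k:ℝ)/N)
      + (β * (|c 0| + |c 1|) + 2 * (Real.log N + 1)) / N := by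
  classical
  have hN0 : (0:ℝ) < N := by exact_mod_cast hN
  have h01 := fin_zero_ne_one hD
  have hv0 := v0_pos hN v hv1 hv2
  have hv1N := v1_le hN v hD hv2
  have hv0R : (1:ℝ) ≤ (v 0 : ℝ) := by exact_mod_cast hv0
  have hv1R : (v 1 : ℝ) + 1 ≤ N := by exact_mod_cast hv1N
  set q : Fin (D+1) → ℝ := fun k =>
    if k = 0 then ((v 0 : ℝ) - 1)/N else if k = 1 then ((v 1 : ℝ)+1)/N else (v k : ℝ)/N with hq
  have hq0 : q 0 = ((v 0 : ℝ) - 1)/N := by simp [hq]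
  have hq1 : q 1 = ((v 1 : ℝ)+1)/N := by simp [hq, h01.symm]
  have hqk : ∀ k, k ≠ 0 → k ≠ 1 → q k = (v k : ℝ)/N := by
    intro k hk0 hk1; simp [hq, hk0, hk1]
  have hvle : ∀ k, (v k : ℝ) ≤ N := by
    intro k; exact_mod_cast v_le_N hv1 k
  have hsumvN : ∑ k : Fin (D+1), (v k : ℝ)/N = 1 := by
    rw [← Finset.sum_div]
    rw [show (∑ k : Fin (D+1), (v k:ℝ)) = (N:ℝ) by exact_mod_cast hv1]
    field_simp
  have hmeanvN : ∑ k : Fin (D+1), ((k : ℕ) : ℝ) * ((v k : ℝ)/N) = ((N:ℝ) - 1)/N := by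
    have step : ∀ k : Fin (D+1), ((k:ℕ):ℝ) * ((v k:ℝ)/N) = (((k:ℕ):ℝ) * (v k:ℝ))/N :=
      fun k => by ring
    rw [Finset.sum_congr rfl (fun k _ => step k), ← Finset.sum_div]
    congr 1
    have : (∑ k : Fin (D+1), ((k:ℕ):ℝ) * (v k : ℝ)) = ((N - 1 : ℕ) : ℝ) := by
      exact_mod_cast hv2
    rw [this, Nat.cast_sub hN]
    norm_num
  have hqM : q ∈ Mset D := by
    refine ⟨fun k => ?_, ?_, ?_⟩
    · constructor
      · by_cases hk0 : k = 0
        · subst hk0; rw [hq0]; exact div_nonneg (by linarith) (le_of_lt hN0)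
        · by_cases hk1 : k = 1
          · subst hk1; rw [hq1]; positivity
          · rw [hqk k hk0 hk1]; positivity
      · by_cases hk0 : k = 0
        · subst hk0; rw [hq0, div_le_one hN0]; linarith [hvle 0]
        · by_cases hk1 : k = 1
          · subst hk1; rw [hq1, div_le_one hN0]; linarith
          · rw [hqk k hk0 hk1, div_le_one hN0]; exact hvle k
    · have := sum_sub_pair hD q (fun k => (v k : ℝ)/N) hqk
      beta_reduce at this
      rw [hsumvN] at this
      rw [hq0, hq1] at this
      have heq : (((v 0:ℝ) - 1)/N - (v 0:ℝ)/N) + (((v 1:ℝ)+1)/N - (v 1:ℝ)/N) = 0 := by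
        field_simp; ring
      linarith [this, heq]
    · have := sum_sub_pair hD (fun k => ((k:ℕ):ℝ) * q k)
        (fun k => ((k:ℕ):ℝ) * ((v k : ℝ)/N)) (fun k h0 h1 => by simp only [hqk k h0 h1])
      beta_reduce at this
      rw [hmeanvN] at this
      have hval0 : (((0 : Fin (D+1)) : ℕ) : ℝ) = 0 := by simp
      have hval1 : (((1 : Fin (D+1)) : ℕ) : ℝ) = 1 := by
        rw [Fin.val_one', Nat.mod_eq_of_lt (by omega)]; norm_num
      rw [hval0, hval1, hq0, hq1] at this
      simp only [zero_mul, one_mul] at this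
      have heq : (((v 1:ℝ)+1)/N - (v 1:ℝ)/N) = 1/N := by field_simp; ring
      rw [heq] at this
      have : ∑ k : Fin (D+1), ((k:ℕ):ℝ) * q k = ((N:ℝ)-1)/N + 1/N := by linarith
      rw [this]
      field_simp; ring
  refine ⟨q, hqM, ?_⟩
  -- energy difference
  have hE := sum_sub_pair hD (fun k => q k * c k) (fun k => ((v k:ℝ)/N) * c k)
    (fun k h0 h1 => by simp only [hqk k h0 h1])
  beta_reduce at hE
  rw [hq0, hq1] at hE
  have hE2 : energyFn D c q - energyFn D c (fun k => (v k:ℝ)/N)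
      = (-(1/N)) * c 0 + (1/N) * c 1 := by
    rw [energyFn, energyFn, hE]
    have e0 : ((v 0:ℝ) - 1)/N * c 0 - (v 0:ℝ)/N * c 0 = (-(1/N)) * c 0 := by ring
    have e1 : ((v 1:ℝ)+1)/N * c 1 - (v 1:ℝ)/N * c 1 = (1/N) * c 1 := by ring
    rw [e0, e1]
  have hEbound : |energyFn D c q - energyFn D c (fun k => (v k:ℝ)/N)|
      ≤ (|c 0| + |c 1|)/N := by
    rw [hE2]
    calc |(-(1/N)) * c 0 + (1/N) * c 1| ≤ |(-(1/N)) * c 0| + |(1/N) * c 1| := abs_add_le _ _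
      _ = (1/N) * |c 0| + (1/N) * |c 1| := by
          rw [abs_mul, abs_mul, abs_neg, abs_of_pos (by positivity : (0:ℝ) < 1/(N:ℝ))]
      _ = (|c 0| + |c 1|)/N := by ring
  -- entropy difference
  have hphi := sum_sub_pair hD (fun k => -(q k * Real.log (q k)))
    (fun k => -(((v k:ℝ)/N) * Real.log ((v k:ℝ)/N))) (fun k h0 h1 => by simp only [hqk k h0 h1])
  beta_reduce at hphi
  have hφN : -((1/(N:ℝ)) * Real.log (1/(N:ℝ))) = Real.log N / N := by
    rw [one_div, Real.log_inv]
    field_simp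
  have hb0 : |(-(q 0 * Real.log (q 0))) - (-(((v 0:ℝ)/N) * Real.log ((v 0:ℝ)/N)))|
      ≤ Real.log N / N + 1/N := by
    rw [hq0]
    have key := phi_diff (a := ((v 0:ℝ) - 1)/N) (δ := 1/N)
      (div_nonneg (by linarith) (le_of_lt hN0)) (by positivity)
      (by rw [← add_div, div_le_one hN0]; linarith [hvle 0])
    rw [← add_div] at key
    have ha : ((v 0:ℝ) - 1 + 1)/N = (v 0:ℝ)/N := by ring_nf
    rw [ha] at key
    rw [abs_sub_comm]
    calc _ ≤ -(1/(N:ℝ) * Real.log (1/(N:ℝ))) + 1/N := key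
      _ = Real.log N / N + 1/N := by rw [hφN]
  have hb1 : |(-(q 1 * Real.log (q 1))) - (-(((v 1:ℝ)/N) * Real.log ((v 1:ℝ)/N)))|
      ≤ Real.log N / N + 1/N := by
    rw [hq1]
    have key := phi_diff (a := (v 1:ℝ)/N) (δ := 1/N)
      (by positivity) (by positivity)
      (by rw [← add_div, div_le_one hN0]; linarith)
    rw [← add_div] at key
    calc _ ≤ -(1/(N:ℝ) * Real.log (1/(N:ℝ))) + 1/N := key
      _ = Real.log N / N + 1/N := by rw [hφN]
  have hHbound : |entropyFn D q - entropyFn D (fun k => (v k:ℝ)/N)|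
      ≤ 2 * (Real.log N + 1)/N := by
    have heq : entropyFn D q - entropyFn D (fun k => (v k:ℝ)/N)
        = ∑ k, (-(q k * Real.log (q k))) - ∑ k, (-(((v k:ℝ)/N) * Real.log ((v k:ℝ)/N))) := by
      rw [entropyFn, entropyFn]
      rw [← Finset.sum_neg_distrib, ← Finset.sum_neg_distrib]
    rw [heq, hphi]
    calc |_ + _| ≤ |(-(q 0 * Real.log (q 0))) - (-(((v 0:ℝ)/N) * Real.log ((v 0:ℝ)/N)))|
          + |(-(q 1 * Real.log (q 1))) - (-(((v 1:ℝ)/N) * Real.log ((v 1:ℝ)/N)))| := abs_add_le _ _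
      _ ≤ (Real.log N / N + 1/N) + (Real.log N / N + 1/N) := add_le_add hb0 hb1
      _ = 2 * (Real.log N + 1)/N := by ring
  -- combine
  have h1 : Jfun D β c q - Jfun D β c (fun k => (v k:ℝ)/N)
      = β * (energyFn D c q - energyFn D c (fun k => (v k:ℝ)/N))
        - (entropyFn D q - entropyFn D (fun k => (v k:ℝ)/N)) := by
    rw [Jfun, Jfun]; ring
  have h2 : |Jfun D β c q - Jfun D β c (fun k => (v k:ℝ)/N)|
      ≤ β * ((|c 0| + |c 1|)/N) + 2 * (Real.log N + 1)/N := by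
    rw [h1]
    calc |β * _ - _| ≤ |β * (energyFn D c q - energyFn D c (fun k => (v k:ℝ)/N))|
          + |entropyFn D q - entropyFn D (fun k => (v k:ℝ)/N)| := abs_sub _ _
      _ ≤ β * ((|c 0| + |c 1|)/N) + 2 * (Real.log N + 1)/N := by
          refine add_le_add ?_ hHbound
          rw [abs_mul, abs_of_pos hβ]
          exact mul_le_mul_of_nonneg_left hEbound (le_of_lt hβ)
  have h3 := (abs_le.mp h2).2
  have heq2 : β * ((|c 0| + |c 1|)/N) + 2 * (Real.log N + 1)/N
      = (β * (|c 0| + |c 1|) + 2 * (Real.log N + 1)) / N := by ring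
  linarith [heq2 ▸ h3]


lemma tendsto_const_div_nat (C : ℝ) : Tendsto (fun N : ℕ => C / N) atTop (nhds 0) := by
  simpa [div_eq_mul_inv] using (tendsto_one_div_atTop_nhds_zero_nat.const_mul C)

lemma tendsto_of_bounded_diff (f : ℕ → ℝ) (x C : ℝ)
    (h : ∀ N : ℕ, 1 ≤ N → |f N - N * x| ≤ C) :
    Tendsto (fun N : ℕ => f N / N) atTop (nhds x) := by
  have h0 : Tendsto (fun N : ℕ => (f N - N * x)/N) atTop (nhds 0) := by
    apply squeeze_zero_norm' (a := fun N : ℕ => C / N)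
    · filter_upwards [eventually_ge_atTop 1] with N hN
      have hN0 : (0:ℝ) < N := by exact_mod_cast hN
      rw [norm_div, Real.norm_natCast, Real.norm_eq_abs]
      exact (div_le_div_iff_of_pos_right hN0).mpr (h N hN)
    · exact tendsto_const_div_nat C
  have h2 : Tendsto (fun N : ℕ => x + (f N - N*x)/N) atTop (nhds (x + 0)) :=
    tendsto_const_nhds.add h0
  rw [add_zero] at h2
  apply h2.congr'
  filter_upwards [eventually_ge_atTop 1] with N hN
  have hN0 : (N:ℝ) ≠ 0 := by positivity
  field_simp
  ring

lemma sum_split01 {D : ℕ} (hD : 2 ≤ D) {M : Type*} [AddCommMonoid M] (f : Fin (D+1) → M) :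
    ∑ k, f k = f 0 + f 1 + ∑ k ∈ ((Finset.univ : Finset (Fin (D+1))).erase 0).erase 1, f k := by
  have h01 := fin_zero_ne_one hD
  rw [← Finset.add_sum_erase _ f (Finset.mem_univ 0)]
  rw [← Finset.add_sum_erase _ f (Finset.mem_erase.mpr ⟨h01.symm, Finset.mem_univ 1⟩)]
  rw [← add_assoc]


set_option maxHeartbeats 2000000 in
lemma exists_mvec {D : ℕ} (hD : 2 ≤ D) (P : Fin (D+1) → ℝ) (hP : P ∈ Mset D) :
    ∃ m : ℕ → Fin (D+1) → ℕ,
      (∀ N, 1 ≤ N → ∑ k, m N k = N) ∧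
      (∀ N, 1 ≤ N → ∑ k : Fin (D+1), (k:ℕ) * m N k = N - 1) ∧
      ∀ k, Tendsto (fun N : ℕ => (m N k : ℝ)/N) atTop (nhds (P k)) := by
  classical
  obtain ⟨hP01, hPsum, hPmean⟩ := hP
  have h01 := fin_zero_ne_one hD
  set R : Finset (Fin (D+1)) := ((Finset.univ : Finset (Fin (D+1))).erase 0).erase 1 with hR
  have hRmem : ∀ {k : Fin (D+1)}, k ∈ R ↔ k ≠ 1 ∧ k ≠ 0 := by
    intro k
    simp [hR, Finset.mem_erase]
  set F : ℕ → Fin (D+1) → ℕ := fun N j => ⌊((N:ℝ)-1) * P j⌋₊ with hF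
  set T : ℕ → ℕ := fun N => ∑ j ∈ R, (j:ℕ) * F N j with hT
  set S : ℕ → ℕ := fun N => ∑ j ∈ R, F N j with hS
  set m : ℕ → Fin (D+1) → ℕ := fun N k =>
    if k = 0 then T N - S N + 1 else if k = 1 then N - 1 - T N else F N k with hm
  have hm0 : ∀ N, m N 0 = T N - S N + 1 := fun N => by simp [hm]
  have hm1v : ∀ N, m N 1 = N - 1 - T N := fun N => by simp [hm, h01.symm]
  have hmR : ∀ N, ∀ j ∈ R, m N j = F N j := by
    intro N j hj
    obtain ⟨hj1, hj0⟩ := hRmem.mp hj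
    simp [hm, hj0, hj1]
  have hval1 : ((1 : Fin (D+1)) : ℕ) = 1 := by
    rw [Fin.val_one', Nat.mod_eq_of_lt (by omega)]
  -- real quantities
  set t : ℝ := ∑ j ∈ R, ((j:ℕ):ℝ) * P j with ht
  set s : ℝ := ∑ j ∈ R, P j with hs
  have hPnn : ∀ k, 0 ≤ P k := fun k => (hP01 k).1
  have hP1' : ∀ k, P k ≤ 1 := fun k => (hP01 k).2
  have htnn : 0 ≤ t := Finset.sum_nonneg fun j _ => mul_nonneg (by positivity) (hPnn j)
  have hsnn : 0 ≤ s := Finset.sum_nonneg fun j _ => hPnn j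
  have hmean_split : P 1 + t = 1 := by
    have := sum_split01 hD (fun k => ((k:ℕ):ℝ) * P k)
    rw [hPmean] at this
    beta_reduce at this
    rw [hval1] at this
    norm_num at this
    linarith [this]
  have hsum_split : P 0 + P 1 + s = 1 := by
    have := sum_split01 hD P
    rw [hPsum] at this
    linarith [this]
  have ht1 : t ≤ 1 := by nlinarith [hPnn 1]
  -- floor bounds
  have hFle : ∀ N, 1 ≤ N → ∀ j, (F N j : ℝ) ≤ ((N:ℝ)-1) * P j := by
    intro N hN j
    have hNR : (1:ℝ) ≤ N := by exact_mod_cast hN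
    exact Nat.floor_le (mul_nonneg (by linarith) (hPnn j))
  have hFgt : ∀ (N : ℕ) (j : Fin (D+1)), ((N:ℝ)-1) * P j < (F N j : ℝ) + 1 := by
    intro N j
    exact Nat.lt_floor_add_one _
  have hFabs : ∀ N, 1 ≤ N → ∀ j, |(F N j : ℝ) - N * P j| ≤ 2 := by
    intro N hN j
    have h1 := hFle N hN j
    have h2 := hFgt N j
    have := hPnn j; have := hP1' j
    rw [abs_le]
    constructor <;> nlinarith
  -- T and S bounds
  have hcardR : (R.card : ℝ) ≤ (D:ℝ)+1 := by
    have : R.card ≤ Fintype.card (Fin (D+1)) := Finset.card_le_univ R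
    rw [Fintype.card_fin] at this
    exact_mod_cast this
  have hjD : ∀ j : Fin (D+1), ((j:ℕ):ℝ) ≤ (D:ℝ) := by
    intro j
    have := j.isLt
    have : (j : ℕ) ≤ D := by omega
    exact_mod_cast this
  have hTabs : ∀ N, 1 ≤ N → |(T N : ℝ) - N * t| ≤ 2*((D:ℝ)+1)^2 := by
    intro N hN
    have hcast : (T N : ℝ) = ∑ j ∈ R, ((j:ℕ):ℝ) * (F N j : ℝ) := by
      rw [hT]; push_cast; rfl
    rw [hcast, ht, Finset.mul_sum, ← Finset.sum_sub_distrib]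
    calc |∑ j ∈ R, (((j:ℕ):ℝ) * (F N j : ℝ) - (N:ℝ) * (((j:ℕ):ℝ) * P j))|
        ≤ ∑ j ∈ R, |((j:ℕ):ℝ) * (F N j : ℝ) - (N:ℝ) * (((j:ℕ):ℝ) * P j)| :=
        Finset.abs_sum_le_sum_abs _ _
      _ ≤ ∑ j ∈ R, 2*((D:ℝ)+1) := by
          refine Finset.sum_le_sum fun j _ => ?_
          have heq : ((j:ℕ):ℝ) * (F N j : ℝ) - (N:ℝ) * (((j:ℕ):ℝ) * P j)
              = ((j:ℕ):ℝ) * ((F N j : ℝ) - N * P j) := by ring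
          rw [heq, abs_mul, abs_of_nonneg (by positivity : (0:ℝ) ≤ ((j:ℕ):ℝ))]
          have h1 := hFabs N hN j
          have h2 := hjD j
          have h3 : (0:ℝ) ≤ ((j:ℕ):ℝ) := by positivity
          nlinarith
      _ ≤ 2*((D:ℝ)+1)^2 := by
          rw [Finset.sum_const, nsmul_eq_mul]
          nlinarith [hcardR, Nat.cast_nonneg (α := ℝ) R.card]
  have hSabs : ∀ N, 1 ≤ N → |(S N : ℝ) - N * s| ≤ 2*((D:ℝ)+1) := by
    intro N hN
    have hcast : (S N : ℝ) = ∑ j ∈ R, (F N j : ℝ) := by rw [hS]; push_cast; rfl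
    rw [hcast, hs, Finset.mul_sum, ← Finset.sum_sub_distrib]
    calc |∑ j ∈ R, ((F N j : ℝ) - (N:ℝ) * P j)|
        ≤ ∑ j ∈ R, |(F N j : ℝ) - (N:ℝ) * P j| := Finset.abs_sum_le_sum_abs _ _
      _ ≤ ∑ j ∈ R, 2 := Finset.sum_le_sum fun j _ => hFabs N hN j
      _ ≤ 2*((D:ℝ)+1) := by
          rw [Finset.sum_const, nsmul_eq_mul]
          nlinarith [hcardR, Nat.cast_nonneg (α := ℝ) R.card]
  have hTleN : ∀ N, 1 ≤ N → T N ≤ N - 1 := by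
    intro N hN
    have hNR : (1:ℝ) ≤ N := by exact_mod_cast hN
    have hreal : (T N : ℝ) ≤ ((N:ℝ)-1) := by
      have hcast : (T N : ℝ) = ∑ j ∈ R, ((j:ℕ):ℝ) * (F N j : ℝ) := by
        rw [hT]; push_cast; rfl
      rw [hcast]
      calc ∑ j ∈ R, ((j:ℕ):ℝ) * (F N j : ℝ)
          ≤ ∑ j ∈ R, ((j:ℕ):ℝ) * (((N:ℝ)-1) * P j) := by
            refine Finset.sum_le_sum fun j _ => ?_
            exact mul_le_mul_of_nonneg_left (hFle N hN j) (by positivity)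
        _ = ((N:ℝ)-1) * t := by
            rw [ht, Finset.mul_sum]
            refine Finset.sum_congr rfl fun j _ => by ring
        _ ≤ ((N:ℝ)-1) * 1 := by
            apply mul_le_mul_of_nonneg_left ht1 (by linarith)
        _ = (N:ℝ)-1 := by ring
    have : (T N : ℝ) ≤ ((N - 1 : ℕ) : ℝ) := by
      rwa [Nat.cast_sub hN, Nat.cast_one]
    exact_mod_cast this
  have hSleT : ∀ N, S N ≤ T N := by
    intro N
    refine Finset.sum_le_sum fun j hj => ?_
    obtain ⟨hj1, hj0⟩ := hRmem.mp hj
    have : 1 ≤ (j : ℕ) := by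
      rcases Nat.eq_zero_or_pos (j:ℕ) with h | h
      · exact absurd (Fin.ext (by simp [h]) : j = 0) hj0
      · exact h
    exact Nat.le_mul_of_pos_left _ (by omega)
  refine ⟨m, ?_, ?_, ?_⟩
  · intro N hN
    rw [sum_split01 hD (m N), hm0, hm1v, Finset.sum_congr rfl (hmR N)]
    have hSval : ∑ j ∈ R, F N j = S N := rfl
    rw [hSval]
    have h1 := hTleN N hN
    have h2 := hSleT N
    omega
  · intro N hN
    rw [sum_split01 hD (fun k => (k:ℕ) * m N k)]
    beta_reduce
    rw [hm0, hm1v, hval1]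
    simp only [Fin.val_zero, Nat.zero_mul, Nat.one_mul]
    rw [Finset.sum_congr rfl (fun j hj => by rw [hmR N j hj])]
    have hTval : ∑ j ∈ R, (j:ℕ) * F N j = T N := rfl
    rw [hTval]
    have h1 := hTleN N hN
    omega
  · intro k
    by_cases hk0 : k = 0
    · subst hk0
      apply tendsto_of_bounded_diff _ _ (2 + 2*((D:ℝ)+1)^2 + 2*((D:ℝ)+1))
      intro N hN
      rw [hm0]
      have hc : ((T N - S N + 1 : ℕ) : ℝ) = (T N : ℝ) - S N + 1 := by
        rw [Nat.cast_add, Nat.cast_sub (hSleT N)]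
        norm_num
      rw [hc]
      have hP0 : P 0 = t - s := by linarith
      rw [hP0]
      have h1 := hTabs N hN
      have h2 := hSabs N hN
      rw [abs_le] at *
      constructor <;> nlinarith
    · by_cases hk1 : k = 1
      · subst hk1
        apply tendsto_of_bounded_diff _ _ (2 + 2*((D:ℝ)+1)^2)
        intro N hN
        rw [hm1v]
        have hc : ((N - 1 - T N : ℕ) : ℝ) = (N : ℝ) - 1 - T N := by
          rw [Nat.cast_sub (by have := hTleN N hN; omega), Nat.cast_sub hN]
          norm_num
        rw [hc]
        have hP1v : P 1 = 1 - t := by linarith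
        rw [hP1v]
        have h1 := hTabs N hN
        rw [abs_le] at *
        constructor <;> nlinarith
      · have hkR : k ∈ R := hRmem.mpr ⟨hk1, hk0⟩
        apply tendsto_of_bounded_diff _ _ 2
        intro N hN
        rw [hmR N k hkR]
        exact hFabs N hN k


lemma Jfun_continuous (D : ℕ) (β : ℝ) (c : Fin (D+1) → ℝ) : Continuous (Jfun D β c) := by
  unfold Jfun energyFn entropyFn
  apply Continuous.sub
  · apply continuous_const.mul
    exact continuous_finset_sum _ fun k _ => (continuous_apply k).mul continuous_const
  · exact (continuous_finset_sum _ fun k _ =>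
      (Real.continuous_mul_log.comp (continuous_apply k))).neg

lemma tendsto_log_div_nat : Tendsto (fun N : ℕ => Real.log N / N) atTop (nhds 0) := by
  have h := Real.isLittleO_log_id_atTop.tendsto_div_nhds_zero
  simpa [Function.comp_def] using h.comp (tendsto_natCast_atTop_atTop (R := ℝ))

lemma tendsto_log_succ_div_nat : Tendsto (fun N : ℕ => Real.log ((N:ℝ)+1) / N) atTop (nhds 0) := by
  apply tendsto_of_tendsto_of_tendsto_of_le_of_le' (g := fun _ : ℕ => (0:ℝ))
    (h := fun N : ℕ => Real.log 2 / N + Real.log N / N)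
  · exact tendsto_const_nhds
  · have h1 := tendsto_const_div_nat (Real.log 2)
    have := h1.add tendsto_log_div_nat
    simpa using this
  · filter_upwards [eventually_ge_atTop 1] with N hN
    have hN1 : (1:ℝ) ≤ N := by exact_mod_cast hN
    have h6 : 0 ≤ Real.log ((N:ℝ)+1) := Real.log_nonneg (by linarith)
    exact div_nonneg h6 (by linarith)
  · filter_upwards [eventually_ge_atTop 1] with N hN
    have hN1 : (1:ℝ) ≤ N := by exact_mod_cast hN
    have h2 : (N:ℝ)+1 ≤ 2*N := by linarith
    have h3 : Real.log ((N:ℝ)+1) ≤ Real.log (2*N) := Real.log_le_log (by linarith) h2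
    rw [Real.log_mul (by norm_num) (by linarith)] at h3
    rw [← add_div]
    exact (div_le_div_iff_of_pos_right (lt_of_lt_of_le zero_lt_one hN1)).mpr h3

lemma tendsto_err_combo (a b C : ℝ) :
    Tendsto (fun N : ℕ => (a * (1 + Real.log N) + b * Real.log ((N:ℝ)+1) + C)/N)
      atTop (nhds 0) := by
  have heq : (fun N : ℕ => (a * (1 + Real.log N) + b * Real.log ((N:ℝ)+1) + C)/N)
      = fun N : ℕ => (a + C) * (1/(N:ℝ)) + a * (Real.log N/N) + b * (Real.log ((N:ℝ)+1)/N) := by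
    funext N
    field_simp
    ring
  rw [heq]
  have h1 := tendsto_one_div_atTop_nhds_zero_nat.const_mul (a + C)
  have h2 := tendsto_log_div_nat.const_mul a
  have h3 := tendsto_log_succ_div_nat.const_mul b
  have := (h1.add h2).add h3
  simpa using this

lemma sum_exp_TnSet {D N : ℕ} (β : ℝ) (c : Fin (D+1) → ℝ) (v : Fin (D+1) → ℕ) :
    ∑ d ∈ TnSet D N v, Real.exp (-β * Hamil D N c d)
      = ((TnSet D N v).card : ℝ) * Real.exp (-β * ∑ k, (v k : ℝ) * c k) := by
  rw [Finset.sum_congr rfl (fun d hd => ?_), Finset.sum_const, nsmul_eq_mul]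
  have hchi : ∀ k, chi D N d k = v k := (Finset.mem_filter.mp hd).2
  have hH : Hamil D N c d = ∑ k, (v k : ℝ) * c k := by
    rw [Hamil, sum_comp_chi d c]
    refine Finset.sum_congr rfl fun k _ => ?_
    rw [hchi k, nsmul_eq_mul]
  rw [hH]

lemma NJ_eq {D : ℕ} (N : ℕ) (hN : 1 ≤ N) (β : ℝ) (c : Fin (D+1) → ℝ) (v : Fin (D+1) → ℕ) :
    (N:ℝ) * Jfun D β c (fun k => (v k:ℝ)/N)
      = β * (∑ k, (v k:ℝ) * c k) - (N:ℝ) * entropyFn D (fun k => (v k:ℝ)/N) := by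
  rw [Jfun, mul_sub]
  congr 1
  rw [← Nmul_energy N hN c v]
  ring

lemma key_abs {D : ℕ} (N : ℕ) (hN : 1 ≤ N) (β : ℝ) (c : Fin (D+1) → ℝ)
    (v : Fin (D+1) → ℕ) (hv1 : ∑ k, v k = N) (hv2 : ∑ k : Fin (D+1), (k:ℕ) * v k = N - 1) :
    |Real.log ((TnSet D N v).card) - β * (∑ k, (v k:ℝ) * c k)
      + (N:ℝ) * Jfun D β c (fun k => (v k:ℝ)/N)| ≤ ((D:ℝ)+3) * (1 + Real.log N) := by
  rw [NJ_eq N hN β c v]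
  have h := abs_log_card_Tn hN v hv1 hv2
  have heq : Real.log ((TnSet D N v).card) - β * (∑ k, (v k:ℝ) * c k)
      + (β * (∑ k, (v k:ℝ) * c k) - (N:ℝ) * entropyFn D (fun k => (v k:ℝ)/N))
      = Real.log ((TnSet D N v).card) - (N:ℝ) * entropyFn D (fun k => (v k:ℝ)/N) := by ring
  rw [heq]
  exact h

lemma chi_le_N {D N : ℕ} (d : Fin N → Fin (D+1)) (k : Fin (D+1)) : chi D N d k ≤ N := by
  have := chi_sum d
  calc chi D N d k ≤ ∑ j, chi D N d j :=
    Finset.single_le_sum (fun j _ => Nat.zero_le _) (Finset.mem_univ k)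
  _ = N := this

lemma Zpart_le {D N : ℕ} (hD : 2 ≤ D) (hN : 1 ≤ N) (β : ℝ) (hβ : 0 < β)
    (c : Fin (D+1) → ℝ) (pstar : Fin (D+1) → ℝ)
    (hmin : ∀ q ∈ Mset D, Jfun D β c pstar ≤ Jfun D β c q) :
    Zpart D N β c ≤ ((N:ℝ)+1)^(D+1) * Real.exp (-(N:ℝ) * Jfun D β c pstar
      + (β * (|c 0| + |c 1|) + 2 * (Real.log N + 1)) + ((D:ℝ)+3)*(1+Real.log N)) := by
  classical
  set B : ℝ := Real.exp (-(N:ℝ) * Jfun D β c pstar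
      + (β * (|c 0| + |c 1|) + 2 * (Real.log N + 1)) + ((D:ℝ)+3)*(1+Real.log N)) with hB
  set V : Finset (Fin (D+1) → ℕ) := (Trees D N).image (chi D N) with hV
  have hgroup : Zpart D N β c
      = ∑ v ∈ V, ∑ d ∈ (Trees D N).filter (fun d => chi D N d = v),
          Real.exp (-β * Hamil D N c d) := by
    rw [Zpart]
    rw [Finset.sum_fiberwise_of_maps_to (fun d hd => Finset.mem_image_of_mem _ hd)]
  have hfilter : ∀ v, (Trees D N).filter (fun d => chi D N d = v) = TnSet D N v := by
    intro v
    apply Finset.filter_congr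
    intro d _
    exact funext_iff
  have hterm : ∀ v ∈ V, ∑ d ∈ TnSet D N v, Real.exp (-β * Hamil D N c d) ≤ B := by
    intro v hv
    obtain ⟨d, hd, hchi⟩ := Finset.mem_image.mp hv
    have hdv : ∀ k, chi D N d k = v k := fun k => congrFun hchi k
    have hv1 : ∑ k, v k = N := by
      rw [← chi_sum d]
      exact Finset.sum_congr rfl fun k _ => (hdv k).symm
    have hdO : d ∈ OmegaSet D N v := chi_mem_Omega hdv
    have htree : IsTreeSeq D N d := by
      have := Finset.mem_filter.mp hd
      exact this.2
    have hv2 : ∑ k : Fin (D+1), (k:ℕ) * v k = N - 1 := by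
      rw [← sum_val_of_mem_Omega hdO]
      exact htree.1
    have hTne : (TnSet D N v).Nonempty :=
      TnSet_nonempty hN v hv1 hv2 (Omega_nonempty v hv1)
    have hTpos : (0:ℝ) < (TnSet D N v).card := by
      exact_mod_cast Finset.card_pos.mpr hTne
    rw [sum_exp_TnSet β c v]
    have hexp : ((TnSet D N v).card : ℝ) * Real.exp (-β * ∑ k, (v k : ℝ) * c k)
        = Real.exp (Real.log ((TnSet D N v).card) - β * ∑ k, (v k : ℝ) * c k) := by
      rw [Real.exp_sub, Real.exp_log hTpos]
      ring_nf
      rw [← Real.exp_neg]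
    rw [hexp, hB]
    apply Real.exp_le_exp.mpr
    have hkey := (abs_le.mp (key_abs N hN β c v hv1 hv2)).2
    obtain ⟨q, hqM, hq⟩ := Jfun_shift hD hN β hβ c v hv1 hv2
    have hps := hmin q hqM
    have hNpos : (0:ℝ) < N := by exact_mod_cast hN
    have hshift : -(N:ℝ) * Jfun D β c (fun k => (v k:ℝ)/N)
        ≤ -(N:ℝ) * Jfun D β c pstar + (β * (|c 0| + |c 1|) + 2 * (Real.log N + 1)) := by
      have h2 : Jfun D β c pstar
          ≤ Jfun D β c (fun k => (v k:ℝ)/N)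
            + (β * (|c 0| + |c 1|) + 2 * (Real.log N + 1)) / N := le_trans hps hq
      have h3 := mul_le_mul_of_nonneg_left h2 (le_of_lt hNpos)
      rw [mul_add, mul_div_cancel₀ _ (ne_of_gt hNpos)] at h3
      linarith
    linarith
  have hcardV : (V.card : ℝ) ≤ ((N:ℝ)+1)^(D+1) := by
    have hsub : V ⊆ Fintype.piFinset (fun _ : Fin (D+1) => Finset.range (N+1)) := by
      intro v hv
      obtain ⟨d, _, hchi⟩ := Finset.mem_image.mp hv
      rw [Fintype.mem_piFinset]
      intro k
      rw [Finset.mem_range]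
      have : v k = chi D N d k := (congrFun hchi k).symm
      rw [this]
      exact Nat.lt_succ_of_le (chi_le_N d k)
    have hc := Finset.card_le_card hsub
    rw [Fintype.card_piFinset] at hc
    simp only [Finset.card_range, Finset.prod_const, Finset.card_univ, Fintype.card_fin] at hc
    calc (V.card : ℝ) ≤ ((N+1)^(D+1) : ℕ) := by exact_mod_cast hc
      _ = ((N:ℝ)+1)^(D+1) := by push_cast; ring
  have hBpos : 0 < B := Real.exp_pos _
  calc Zpart D N β c = ∑ v ∈ V, ∑ d ∈ (Trees D N).filter (fun d => chi D N d = v),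
          Real.exp (-β * Hamil D N c d) := hgroup
    _ = ∑ v ∈ V, ∑ d ∈ TnSet D N v, Real.exp (-β * Hamil D N c d) := by
        refine Finset.sum_congr rfl fun v _ => ?_
        rw [hfilter v]
    _ ≤ ∑ v ∈ V, B := Finset.sum_le_sum hterm
    _ = V.card * B := by rw [Finset.sum_const, nsmul_eq_mul]
    _ ≤ ((N:ℝ)+1)^(D+1) * B := mul_le_mul_of_nonneg_right hcardV (le_of_lt hBpos)

/-- if `n(N)/N → p ∈ M` along admissible degree distributions,
then `(1/N) ln P_N{χ = n(N)} → −I(p) = −(J(p) − J(p*))`. -/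
theorem stmt7 (D : ℕ) (hD : 2 ≤ D) (β : ℝ) (hβ : 0 < β) (c : Fin (D+1) → ℝ)
    (pstar : Fin (D+1) → ℝ) (hpM : pstar ∈ Mset D)
    (hmin : ∀ q ∈ Mset D, Jfun D β c pstar ≤ Jfun D β c q)
    (huniq : ∀ q ∈ Mset D,
      (∀ r ∈ Mset D, Jfun D β c q ≤ Jfun D β c r) → q = pstar)
    (p : Fin (D+1) → ℝ) (hp : p ∈ Mset D)
    (n : ℕ → Fin (D+1) → ℕ)
    (hn1 : ∀ N, ∑ k, n N k = N)
    (hn2 : ∀ N, ∑ k : Fin (D+1), (k : ℕ) * n N k = N - 1)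
    (hconv : ∀ k, Tendsto (fun N : ℕ => (n N k : ℝ) / N) atTop (nhds (p k))) :
    Tendsto (fun N : ℕ =>
        Real.log (Pgibbs D N β c {d | ∀ k, chi D N d k = n N k}) / N)
      atTop (nhds (-(Jfun D β c p - Jfun D β c pstar))) := by
  classical
  have hqten : Tendsto (fun N : ℕ => (fun k => (n N k : ℝ)/N)) atTop (nhds p) :=
    tendsto_pi_nhds.mpr hconv
  have hJq : Tendsto (fun N : ℕ => Jfun D β c (fun k => (n N k : ℝ)/N)) atTop
      (nhds (Jfun D β c p)) := ((Jfun_continuous D β c).tendsto p).comp hqten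
  have herr : Tendsto (fun N : ℕ => ((D:ℝ)+3) * (1 + Real.log N)/N) atTop (nhds 0) := by
    have h := tendsto_err_combo ((D:ℝ)+3) 0 0
    apply h.congr
    intro N
    ring_nf
  set X : ℕ → ℝ := fun N =>
    (Real.log ((TnSet D N (n N)).card) - β * (∑ k, (n N k:ℝ) * c k))/N with hXdef
  have hXbound : ∀ N : ℕ, 1 ≤ N →
      |X N + Jfun D β c (fun k => (n N k : ℝ)/N)| ≤ ((D:ℝ)+3) * (1 + Real.log N)/N := by
    intro N hN
    have hNpos : (0:ℝ) < N := by exact_mod_cast hN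
    have hk := key_abs N hN β c (n N) (hn1 N) (hn2 N)
    have heq : X N + Jfun D β c (fun k => (n N k : ℝ)/N)
        = (Real.log ((TnSet D N (n N)).card) - β * (∑ k, (n N k:ℝ) * c k)
            + (N:ℝ) * Jfun D β c (fun k => (n N k : ℝ)/N))/N := by
      rw [hXdef]
      field_simp
    rw [heq, abs_div, abs_of_pos hNpos]
    exact (div_le_div_iff_of_pos_right hNpos).mpr hk
  have hXlim : Tendsto X atTop (nhds (-(Jfun D β c p))) := by
    apply tendsto_of_tendsto_of_tendsto_of_le_of_le'
      (g := fun N : ℕ => -Jfun D β c (fun k => (n N k:ℝ)/N) - ((D:ℝ)+3) * (1 + Real.log N)/N)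
      (h := fun N : ℕ => -Jfun D β c (fun k => (n N k:ℝ)/N) + ((D:ℝ)+3) * (1 + Real.log N)/N)
    · simpa using hJq.neg.sub herr
    · simpa using hJq.neg.add herr
    · filter_upwards [eventually_ge_atTop 1] with N hN
      have h := abs_le.mp (hXbound N hN)
      linarith [h.1]
    · filter_upwards [eventually_ge_atTop 1] with N hN
      have h := abs_le.mp (hXbound N hN)
      linarith [h.2]
  -- Z limit
  obtain ⟨m, hm1, hm2, hmconv⟩ := exists_mvec hD pstar hpM
  have hqm : Tendsto (fun N : ℕ => (fun k => (m N k : ℝ)/N)) atTop (nhds pstar) :=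
    tendsto_pi_nhds.mpr hmconv
  have hJm : Tendsto (fun N : ℕ => Jfun D β c (fun k => (m N k : ℝ)/N)) atTop
      (nhds (Jfun D β c pstar)) := ((Jfun_continuous D β c).tendsto pstar).comp hqm
  set errZ : ℕ → ℝ := fun N =>
    (((D:ℝ)+1) * Real.log ((N:ℝ)+1) + (β * (|c 0| + |c 1|) + 2*(Real.log N + 1))
      + ((D:ℝ)+3)*(1+Real.log N))/N with herrZdef
  have herrZ : Tendsto errZ atTop (nhds 0) := by
    have h := tendsto_err_combo (((D:ℝ)+3) + 2) ((D:ℝ)+1) (β * (|c 0| + |c 1|))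
    apply h.congr
    intro N
    rw [herrZdef]
    congr 1
    ring
  have hTne : ∀ N : ℕ, 1 ≤ N → (TnSet D N (n N)).Nonempty := fun N hN =>
    TnSet_nonempty hN (n N) (hn1 N) (hn2 N) (Omega_nonempty (n N) (hn1 N))
  have hTreene : ∀ N : ℕ, 1 ≤ N → (Trees D N).Nonempty := fun N hN =>
    ⟨(hTne N hN).choose, (Finset.filter_subset _ _) (hTne N hN).choose_spec⟩
  have hZpos : ∀ N : ℕ, 1 ≤ N → 0 < Zpart D N β c := fun N hN =>
    Finset.sum_pos (fun d _ => Real.exp_pos _) (hTreene N hN)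
  have hZlow : ∀ N : ℕ, 1 ≤ N →
      -Jfun D β c (fun k => (m N k:ℝ)/N) - ((D:ℝ)+3)*(1+Real.log N)/N
        ≤ Real.log (Zpart D N β c)/N := by
    intro N hN
    have hNpos : (0:ℝ) < N := by exact_mod_cast hN
    have hsub : TnSet D N (m N) ⊆ Trees D N := Finset.filter_subset _ _
    have hTmne : (TnSet D N (m N)).Nonempty :=
      TnSet_nonempty hN (m N) (hm1 N hN) (hm2 N hN) (Omega_nonempty (m N) (hm1 N hN))
    have hTmpos : (0:ℝ) < ((TnSet D N (m N)).card : ℝ) := by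
      exact_mod_cast Finset.card_pos.mpr hTmne
    have hZge : ((TnSet D N (m N)).card : ℝ) * Real.exp (-β * ∑ k, (m N k:ℝ)*c k)
        ≤ Zpart D N β c := by
      rw [← sum_exp_TnSet]
      exact Finset.sum_le_sum_of_subset_of_nonneg hsub
        (fun d _ _ => le_of_lt (Real.exp_pos _))
    have hlogZ : Real.log ((TnSet D N (m N)).card) + (-β * ∑ k, (m N k:ℝ)*c k)
        ≤ Real.log (Zpart D N β c) := by
      have h1 : Real.log (((TnSet D N (m N)).card : ℝ)
          * Real.exp (-β * ∑ k, (m N k:ℝ)*c k)) ≤ Real.log (Zpart D N β c) :=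
        Real.log_le_log (by positivity) hZge
      rwa [Real.log_mul (ne_of_gt hTmpos) (Real.exp_ne_zero _), Real.log_exp] at h1
    have hk := (abs_le.mp (key_abs N hN β c (m N) (hm1 N hN) (hm2 N hN))).1
    have h2 : -(N:ℝ) * Jfun D β c (fun k => (m N k:ℝ)/N) - ((D:ℝ)+3)*(1+Real.log N)
        ≤ Real.log (Zpart D N β c) := by
      have h3 : -(((D:ℝ)+3)*(1+Real.log N))
          ≤ Real.log ((TnSet D N (m N)).card) - β * (∑ k, (m N k:ℝ) * c k)
            + (N:ℝ) * Jfun D β c (fun k => (m N k:ℝ)/N) := hk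
      linarith
    calc -Jfun D β c (fun k => (m N k:ℝ)/N) - ((D:ℝ)+3)*(1+Real.log N)/N
        = (-(N:ℝ) * Jfun D β c (fun k => (m N k:ℝ)/N) - ((D:ℝ)+3)*(1+Real.log N))/N := by
          field_simp
      _ ≤ Real.log (Zpart D N β c)/N := (div_le_div_iff_of_pos_right hNpos).mpr h2
  have hZup : ∀ N : ℕ, 1 ≤ N →
      Real.log (Zpart D N β c)/N ≤ -Jfun D β c pstar + errZ N := by
    intro N hN
    have hNpos : (0:ℝ) < N := by exact_mod_cast hN
    have h1 := Zpart_le hD hN β hβ c pstar hmin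
    have h2 : Real.log (Zpart D N β c) ≤ Real.log (((N:ℝ)+1)^(D+1)
        * Real.exp (-(N:ℝ) * Jfun D β c pstar
          + (β * (|c 0| + |c 1|) + 2 * (Real.log N + 1)) + ((D:ℝ)+3)*(1+Real.log N))) :=
      Real.log_le_log (hZpos N hN) h1
    rw [Real.log_mul (by positivity) (Real.exp_ne_zero _), Real.log_exp,
      Real.log_pow] at h2
    have h3 : Real.log (Zpart D N β c)/N ≤ ((D+1 : ℕ) * Real.log ((N:ℝ)+1)
        + (-(N:ℝ) * Jfun D β c pstar
          + (β * (|c 0| + |c 1|) + 2 * (Real.log N + 1)) + ((D:ℝ)+3)*(1+Real.log N)))/N :=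
      (div_le_div_iff_of_pos_right hNpos).mpr h2
    calc Real.log (Zpart D N β c)/N ≤ _ := h3
      _ = -Jfun D β c pstar + errZ N := by
          rw [herrZdef]
          push_cast
          field_simp
          ring
  have hZlim : Tendsto (fun N : ℕ => Real.log (Zpart D N β c)/N) atTop
      (nhds (-(Jfun D β c pstar))) := by
    apply tendsto_of_tendsto_of_tendsto_of_le_of_le'
      (g := fun N : ℕ => -Jfun D β c (fun k => (m N k:ℝ)/N) - ((D:ℝ)+3)*(1+Real.log N)/N)
      (h := fun N : ℕ => -Jfun D β c pstar + errZ N)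
    · simpa using hJm.neg.sub herr
    · simpa using (tendsto_const_nhds (x := -Jfun D β c pstar)).add herrZ
    · filter_upwards [eventually_ge_atTop 1] with N hN
      exact hZlow N hN
    · filter_upwards [eventually_ge_atTop 1] with N hN
      exact hZup N hN
  -- combine
  have hdiff : Tendsto (fun N : ℕ => X N - Real.log (Zpart D N β c)/N) atTop
      (nhds (-(Jfun D β c p - Jfun D β c pstar))) := by
    have := hXlim.sub hZlim
    have heqc : -(Jfun D β c p) - -(Jfun D β c pstar)
        = -(Jfun D β c p - Jfun D β c pstar) := by ring
    rwa [heqc] at this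
  apply Filter.Tendsto.congr' _ hdiff
  filter_upwards [eventually_ge_atTop 1] with N hN
  have hNpos : (0:ℝ) < N := by exact_mod_cast hN
  have hTpos : (0:ℝ) < ((TnSet D N (n N)).card : ℝ) := by
    exact_mod_cast Finset.card_pos.mpr (hTne N hN)
  have hZp := hZpos N hN
  have hnum : Pgibbs D N β c {d | ∀ k, chi D N d k = n N k}
      = ((TnSet D N (n N)).card : ℝ) * Real.exp (-β * ∑ k, (n N k : ℝ) * c k)
        / Zpart D N β c := by
    rw [Pgibbs]
    congr 1
    rw [← sum_exp_TnSet]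
    refine Finset.sum_congr ?_ (fun _ _ => rfl)
    ext d
    simp [TnSet, Set.mem_setOf_eq, Finset.mem_filter]
  rw [hnum, Real.log_div (by positivity) (ne_of_gt hZp),
    Real.log_mul (ne_of_gt hTpos) (Real.exp_ne_zero _), Real.log_exp]
  rw [hXdef]
  field_simp
  ring
end
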